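/- arXiv:2205.07052 — 7 statements merged into one kernel-verified Lean document; each statement's English description precedes it below -/
import Mathlib

section
/- Product Singleton bound: if C and D are linear codes of length n over F_q, then the minimum distance of the star product code C ⋆ D satisfies d_{C⋆D} ≤ max{1, n − dim C − dim D + 2}. -/
def starSet {F : Type*} [Field F] {n : ℕ} (C D : Submodule F (Fin n → F)) :
    Set (Fin n → F) :=
  {v | ∃ c ∈ C, ∃ d ∈ D, v = fun i => c i * d i}

def starProd {F : Type*} [Field F] {n : ℕ} (C D : Submodule F (Fin n → F)) :
    Submodule F (Fin n → F) :=
  Submodule.span F (starSet C D)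

def wt {F : Type*} [Field F] [DecidableEq F] {n : ℕ} (v : Fin n → F) : ℕ :=
  (Finset.univ.filter fun i => v i ≠ 0).card

def IsMinDist {F : Type*} [Field F] [DecidableEq F] {n : ℕ}
    (C : Submodule F (Fin n → F)) (d : ℕ) : Prop :=
  (∃ v ∈ C, v ≠ 0 ∧ wt v = d) ∧ ∀ v ∈ C, v ≠ 0 → d ≤ wt v


/-!
Call the support of `c ⋆ D` the set of coordinates where `c` and some word of `D` are both nonzero.
Pick `c ∈ C` for which it is a smallest nonempty set `S`, and let `m` be the dimension of the words
of `D` vanishing on `S`. If `|S| + m + dim C ≤ n + 1`, a word of `D` vanishing on `dim D - m - 1`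
points of `S`, but not on all of `S`, multiplies `c` into a nonzero word of weight at most
`n - dim C - dim D + 2`. Otherwise, by minimality of `S`, no nonzero word of `C` vanishes outside
`S` minus a point, and counting dimensions against an information set of the words of `D`
vanishing on `S` gives a nonzero product of weight one.
-/

open Module Finset

section VanishingOn

variable {F ι : Type*} [Field F]

def vanishingOn (F : Type*) [Field F] (Z : Finset ι) : Submodule F (ι → F) :=
  LinearMap.ker (LinearMap.funLeft F F ((↑) : Z → ι))

theorem mem_vanishingOn {Z : Finset ι} {v : ι → F} :
    v ∈ vanishingOn F Z ↔ ∀ j ∈ Z, v j = 0 := by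
  simp [vanishingOn, funext_iff, LinearMap.funLeft_apply]

variable [Fintype ι]

theorem finrank_le_finrank_inf_vanishingOn_add_card (E : Submodule F (ι → F)) (Z : Finset ι) :
    finrank F E ≤ finrank F ↥(E ⊓ vanishingOn F Z) + #Z := by
  let π := LinearMap.funLeft F F ((↑) : Z → ι)
  have h_rank_nullity := π.finrank_range_add_finrank_ker
  have h_range := Submodule.finrank_le (LinearMap.range π)
  have h_sup_inf := Submodule.finrank_sup_add_finrank_inf_eq E (LinearMap.ker π)
  have h_sup := Submodule.finrank_le (E ⊔ LinearMap.ker π)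
  simp only [finrank_fintype_fun_eq_card, Fintype.card_coe] at h_rank_nullity h_range h_sup
  change finrank F E ≤ finrank F ↥(E ⊓ LinearMap.ker π) + #Z
  omega

theorem exists_ne_zero_forall_eq_zero (E : Submodule F (ι → F)) (Z : Finset ι)
    (h : #Z < finrank F E) : ∃ e ∈ E, e ≠ 0 ∧ ∀ j ∈ Z, e j = 0 := by
  have h_le := finrank_le_finrank_inf_vanishingOn_add_card E Z
  have h_ne : E ⊓ vanishingOn F Z ≠ ⊥ := fun h_bot => by
    rw [h_bot, finrank_bot] at h_le
    omega
  obtain ⟨e, he, he0⟩ := Submodule.exists_mem_ne_zero_of_ne_bot h_ne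
  exact ⟨e, he.1, he0, mem_vanishingOn.mp he.2⟩

theorem exists_forall_eq_zero_exists_ne_zero (E : Submodule F (ι → F)) {S Z : Finset ι}
    (h : #Z + finrank F ↥(E ⊓ vanishingOn F S) < finrank F E) :
    ∃ e ∈ E, (∀ j ∈ Z, e j = 0) ∧ ∃ j ∈ S, e j ≠ 0 := by
  by_contra! h_none
  have h_le : E ⊓ vanishingOn F Z ≤ E ⊓ vanishingOn F S := fun e he =>
    ⟨he.1, mem_vanishingOn.mpr (h_none e he.1 (mem_vanishingOn.mp he.2))⟩
  have := Submodule.finrank_mono h_le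
  have := finrank_le_finrank_inf_vanishingOn_add_card E Z
  omega

theorem exists_information_set (E : Submodule F (ι → F)) :
    ∃ T : Finset ι, #T = finrank F E ∧ ∀ x : ι → F, ∃ e ∈ E, ∀ t ∈ T, e t = x t := by
  classical
  suffices ∀ r ≤ finrank F E,
      ∃ T : Finset ι, #T = r ∧ ∀ x : ι → F, ∃ e ∈ E, ∀ t ∈ T, e t = x t from this _ le_rfl
  intro r hr
  induction r with
  | zero => exact ⟨∅, rfl, fun _ => ⟨0, E.zero_mem, by simp⟩⟩
  | succ r ih =>
    obtain ⟨T, hT, h_interp⟩ := ih (by omega)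
    obtain ⟨e₀, he₀E, he₀, he₀T⟩ := exists_ne_zero_forall_eq_zero E T (by omega)
    obtain ⟨j, hj⟩ : ∃ j, e₀ j ≠ 0 := Function.ne_iff.mp he₀
    have hjT : j ∉ T := fun h => hj (he₀T j h)
    refine ⟨insert j T, by rw [card_insert_of_notMem hjT, hT], fun x => ?_⟩
    obtain ⟨e, heE, he⟩ := h_interp x
    -- correct `e` at `j` by a multiple of `e₀`, which vanishes on `T`
    refine ⟨e + ((x j - e j) / e₀ j) • e₀, E.add_mem heE (E.smul_mem _ he₀E), ?_⟩
    intro t ht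
    rcases mem_insert.mp ht with rfl | ht
    · simp [hj]
    · simp [he t ht, he₀T t ht]

theorem exists_mul_eq_single [DecidableEq ι] {A B : Submodule F (ι → F)} (U : Finset ι)
    (hB : B ≤ vanishingOn F Uᶜ) (hA : A ⊓ vanishingOn F U = ⊥)
    (hdim : #U < finrank F A + finrank F B) :
    ∃ a ∈ A, ∃ b ∈ B, ∃ i, a i ≠ 0 ∧ a * b = Pi.single i (a i) := by
  obtain ⟨T, hT, h_interp⟩ := exists_information_set B
  have hTU : T ⊆ U := by
    intro t ht
    by_contra htU
    obtain ⟨b, hb, hbT⟩ := h_interp 1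
    exact one_ne_zero ((hbT t ht).symm.trans (mem_vanishingOn.mp (hB hb) t (mem_compl.mpr htU)))
  obtain ⟨a, haA, ha, haUT⟩ := exists_ne_zero_forall_eq_zero A (U \ T) (by
    rw [card_sdiff_of_subset hTU]
    have := card_le_card hTU
    omega)
  obtain ⟨i, hiU, hai⟩ : ∃ i ∈ U, a i ≠ 0 := by
    by_contra! h
    exact ha ((Submodule.mem_bot F).mp (hA ▸ ⟨haA, mem_vanishingOn.mpr h⟩))
  have hiT : i ∈ T := by
    by_contra hiT
    exact hai (haUT i (mem_sdiff.mpr ⟨hiU, hiT⟩))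
  obtain ⟨b, hbB, hbT⟩ := h_interp (Pi.single i 1)
  refine ⟨a, haA, b, hbB, i, hai, funext fun j => ?_⟩
  by_cases hji : j = i
  · subst hji
    simp [hbT j hiT]
  rw [Pi.single_eq_of_ne hji, Pi.mul_apply]
  by_cases hjT : j ∈ T
  · simp [hbT j hjT, hji]
  by_cases hjU : j ∈ U
  · simp [haUT j (mem_sdiff.mpr ⟨hjU, hjT⟩)]
  · simp [mem_vanishingOn.mp (hB hbB) j (mem_compl.mpr hjU)]

end VanishingOn

section StarSupport

variable {F ι : Type*} [Field F] [Fintype ι]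

open Classical in
noncomputable def starSupport (c : ι → F) (D : Submodule F (ι → F)) : Finset ι :=
  univ.filter fun j => c j ≠ 0 ∧ ∃ e ∈ D, e j ≠ 0

theorem mem_starSupport {c : ι → F} {D : Submodule F (ι → F)} {j : ι} :
    j ∈ starSupport c D ↔ c j ≠ 0 ∧ ∃ e ∈ D, e j ≠ 0 := by
  simp [starSupport]

theorem inf_vanishingOn_compl_erase_eq_bot [DecidableEq ι] {C D : Submodule F (ι → F)}
    {c : ι → F} (h_min : ∀ c' ∈ C, (starSupport c' D).Nonempty →
      #(starSupport c D) ≤ #(starSupport c' D))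
    {i₀ : ι} (hi₀ : i₀ ∈ starSupport c D) :
    C ⊓ vanishingOn F ((starSupport c D).erase i₀)ᶜ = ⊥ := by
  refine eq_bot_iff.mpr fun c' ⟨hc'C, hc'⟩ => (Submodule.mem_bot F).mpr ?_
  by_contra hc'0
  have h_erase : ∀ i, c' i ≠ 0 → i ∈ (starSupport c D).erase i₀ := fun i hi => by
    by_contra h
    exact hi (mem_vanishingOn.mp hc' i (mem_compl.mpr h))
  have h_sub : starSupport c' D ⊆ (starSupport c D).erase i₀ := fun i hi =>
    h_erase i (mem_starSupport.mp hi).1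
  obtain ⟨j, hj⟩ : ∃ j, c' j ≠ 0 := Function.ne_iff.mp hc'0
  have hjS : j ∈ starSupport c' D :=
    mem_starSupport.mpr ⟨hj, (mem_starSupport.mp (mem_of_mem_erase (h_erase j hj))).2⟩
  have := h_min c' hc'C ⟨j, hjS⟩
  have := card_lt_card (h_sub.trans_ssubset (erase_ssubset hi₀))
  omega

end StarSupport

section Codes

variable {F : Type*} [Field F] {n : ℕ}

theorem exists_starSupport_nonempty {C D : Submodule F (Fin n → F)} (h : starProd C D ≠ ⊥) :
    ∃ c ∈ C, (starSupport c D).Nonempty := by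
  by_contra! h_empty
  refine h (Submodule.span_eq_bot.mpr ?_)
  rintro _ ⟨c, hc, e, he, rfl⟩
  funext j
  by_contra hj
  have hjS := mem_starSupport.mpr ⟨left_ne_zero_of_mul hj, e, he, right_ne_zero_of_mul hj⟩
  simp [h_empty c hc] at hjS

variable [DecidableEq F]

theorem wt_single {i : Fin n} {x : F} (hx : x ≠ 0) : wt (Pi.single i x) = 1 := by
  simp [wt, Pi.single_apply, hx, filter_eq']

theorem exists_mul_ne_zero_wt_add_finrank_le (c : Fin n → F) (D : Submodule F (Fin n → F))
    (h : (starSupport c D).Nonempty) :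
    ∃ e ∈ D, c * e ≠ 0 ∧ wt (c * e) + finrank F D ≤
      #(starSupport c D) + finrank F ↥(D ⊓ vanishingOn F (starSupport c D)) + 1 := by
  set S := starSupport c D
  obtain ⟨j, hj⟩ := h
  obtain ⟨-, e₀, he₀D, he₀j⟩ := mem_starSupport.mp hj
  have h_lt : finrank F ↥(D ⊓ vanishingOn F S) < finrank F D :=
    Submodule.finrank_lt_finrank_of_lt <| inf_le_left.lt_of_ne fun h_eq =>
      he₀j (mem_vanishingOn.mp (h_eq.ge he₀D).2 j hj)
  have h_le := finrank_le_finrank_inf_vanishingOn_add_card D S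
  obtain ⟨Z, hZS, hZ⟩ := exists_subset_card_eq
    (s := S) (n := finrank F D - finrank F ↥(D ⊓ vanishingOn F S) - 1) (by omega)
  obtain ⟨e, heD, heZ, i, hiS, hei⟩ := exists_forall_eq_zero_exists_ne_zero D (S := S) (Z := Z)
    (by omega)
  have h_supp : univ.filter (fun i => (c * e) i ≠ 0) ⊆ S \ Z := by
    intro i hi
    obtain ⟨hci, hei⟩ : c i ≠ 0 ∧ e i ≠ 0 := by simpa using hi
    exact mem_sdiff.mpr ⟨mem_starSupport.mpr ⟨hci, e, heD, hei⟩, fun h => hei (heZ i h)⟩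
  refine ⟨e, heD, fun h0 => mul_ne_zero (mem_starSupport.mp hiS).1 hei (congrFun h0 i), ?_⟩
  have := card_le_card h_supp
  rw [card_sdiff_of_subset hZS, hZ] at this
  unfold wt
  omega

theorem exists_mul_ne_zero_wt_le (C D : Submodule F (Fin n → F)) (h : starProd C D ≠ ⊥) :
    ∃ c ∈ C, ∃ e ∈ D, c * e ≠ 0 ∧
      (wt (c * e) : ℤ) ≤ max 1 ((n : ℤ) - finrank F C - finrank F D + 2) := by
  let candidates : Set (Fin n → F) := {c | c ∈ C ∧ (starSupport c D).Nonempty}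
  let size (c : Fin n → F) : ℕ := #(starSupport c D)
  obtain ⟨c, ⟨hcC, i₀, hi₀⟩, h_min⟩ : ∃ c ∈ candidates, ∀ c' ∈ C,
      (starSupport c' D).Nonempty → size c ≤ size c' :=
    have h_ne : candidates.Nonempty := exists_starSupport_nonempty h
    ⟨_, Function.argminOn_mem size _ h_ne, fun c' hc'C hc' =>
      Function.argminOn_le size candidates ⟨hc'C, hc'⟩⟩
  set S := starSupport c D with hS
  by_cases h_low : #S + finrank F ↥(D ⊓ vanishingOn F S) + finrank F C ≤ n + 1
  · obtain ⟨e, heD, hce, h_wt⟩ := exists_mul_ne_zero_wt_add_finrank_le c D ⟨i₀, hi₀⟩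
    rw [← hS] at h_wt
    exact ⟨c, hcC, e, heD, hce, le_max_of_le_right (by omega)⟩
  have hB : D ⊓ vanishingOn F S ≤ vanishingOn F (S.erase i₀)ᶜᶜ := fun e he =>
    mem_vanishingOn.mpr fun j hj => mem_vanishingOn.mp he.2 j (mem_of_mem_erase (by simpa using hj))
  have h_card : #(S.erase i₀)ᶜ + #S = n + 1 := by
    have := card_le_univ S
    have := card_pos.mpr ⟨i₀, hi₀⟩
    rw [card_compl, card_erase_of_mem hi₀]
    simp only [Fintype.card_fin] at *
    omega
  obtain ⟨a, haC, b, hbD, i, hai, hab⟩ :=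
    exists_mul_eq_single _ hB (inf_vanishingOn_compl_erase_eq_bot h_min hi₀) (by omega)
  refine ⟨a, haC, b, hbD.1, fun h0 => hai ?_, ?_⟩
  · have h0i := congrFun h0 i
    rwa [hab, Pi.single_eq_same] at h0i
  · rw [hab, wt_single hai]
    exact le_max_left _ _

end Codes

theorem product_singleton_bound_general {F : Type*} [Field F] [DecidableEq F] {n : ℕ}
    (C D : Submodule F (Fin n → F)) (d : ℕ)
    (hd : IsMinDist (starProd C D) d) :
    (d : ℤ) ≤ max 1 ((n : ℤ) - Module.finrank F C - Module.finrank F D + 2) := by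
  obtain ⟨⟨v, hv, hv0, -⟩, h_min⟩ := hd
  obtain ⟨c, hc, e, he, hce, h_wt⟩ :=
    exists_mul_ne_zero_wt_le C D ((Submodule.ne_bot_iff _).mpr ⟨v, hv, hv0⟩)
  have h_le : d ≤ wt (c * e) := h_min _ (Submodule.subset_span ⟨c, hc, e, he, rfl⟩) hce
  omega

/-- Product Singleton bound: if `C` and `D` are nonzero linear codes of length `n`,
then the minimum distance of `C ⋆ D` satisfies
`d_{C⋆D} ≤ max {1, n - dim C - dim D + 2}`. -/
theorem product_singleton_bound {F : Type*} [Field F] [Fintype F] [DecidableEq F] {n : ℕ}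
    (C D : Submodule F (Fin n → F)) (hC : C ≠ ⊥) (hD : D ≠ ⊥) (d : ℕ)
    (hd : IsMinDist (starProd C D) d) :
    (d : ℤ) ≤ max 1 ((n : ℤ) - Module.finrank F C - Module.finrank F D + 2) :=
  product_singleton_bound_general C D d hd
end

section
/- If C and D are full-support linear codes of length n over F_q and at least one of them is MDS, then dim(C ⋆ D) ≥ min{n, dim C + dim D − 1}. -/
/-- A code is full-support if every coordinate is in the support of some codeword. -/
def FullSupport {F : Type*} [Field F] {n : ℕ} (C : Submodule F (Fin n → F)) : Prop :=
  ∀ i : Fin n, ∃ c ∈ C, c i ≠ 0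

/-- A code is MDS if its minimum distance equals `n - dim C + 1`. -/
def IsMDS {F : Type*} [Field F] [DecidableEq F] {n : ℕ}
    (C : Submodule F (Fin n → F)) : Prop :=
  IsMinDist C (n - Module.finrank F C + 1)

/-!
Let `C` be MDS of dimension `k`. Choose a set `Q` of at least `dim D` pivot coordinates of `D`:
for each `x ∈ Q` some `d_x ∈ D` is nonzero at `x` and vanishes on the rest of `Q`. Outside `Q`
choose `m ≤ k - 1` further coordinates `P` with `m + |Q| = min n (k + |Q| - 1)`. Because `C` is
MDS, for every `x` some `c_x ∈ C` vanishes on `P \ {x}` but not at `x`. The products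
`c_x ⋆ d_x` (`x ∈ Q`) and `c_x ⋆ e_x` (`x ∈ P`, with `e_x ∈ D` nonzero at `x` by full support)
are block triangular with respect to the coordinates `P ∪ Q`, so they are `m + |Q|` independent
elements of `C ⋆ D`.
-/

open Module Finset

theorem linearIndependent_of_triangular {F ι κ : Type*} [Field F] [Fintype κ]
    (v : κ → ι → F) (π : κ → ι) (r : κ → ℕ) (hdiag : ∀ i, v i (π i) ≠ 0)
    (htri : ∀ i j, i ≠ j → r i ≤ r j → v j (π i) = 0) :
    LinearIndependent F v := by
  classical
  rw [Fintype.linearIndependent_iff]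
  intro g hg i
  induction hr : r i using Nat.strong_induction_on generalizing i with
  | _ s ih =>
  have key := congrFun hg (π i)
  simp only [Finset.sum_apply, Pi.smul_apply, smul_eq_mul, Pi.zero_apply] at key
  rw [Finset.sum_eq_single i] at key
  · exact (mul_eq_zero.mp key).resolve_right (hdiag i)
  · intro j _ hji
    rcases le_or_gt (r i) (r j) with h | h
    · rw [htri i j (Ne.symm hji) h, mul_zero]
    · rw [ih (r j) (hr ▸ h) j rfl, zero_mul]
  · simp

section Coordinates

variable {F ι : Type*} [Field F] [Fintype ι] (W : Submodule F (ι → F))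

theorem finrank_le_card_of_vanishing_eq_zero {Q : Finset ι}
    (hQ : ∀ w ∈ W, (∀ x ∈ Q, w x = 0) → w = 0) : finrank F W ≤ #Q := by
  have hinj : Function.Injective (LinearMap.funLeft F F ((↑) : Q → ι) ∘ₗ W.subtype) := by
    rw [← LinearMap.ker_eq_bot, Submodule.eq_bot_iff]
    intro w hw
    exact Subtype.ext (hQ w w.2 fun x hx => congrFun hw ⟨x, hx⟩)
  simpa using LinearMap.finrank_le_finrank_of_injective hinj

theorem exists_ne_zero_vanishing_of_card_lt {Q : Finset ι} (hQ : #Q < finrank F W) :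
    ∃ w ∈ W, w ≠ 0 ∧ ∀ x ∈ Q, w x = 0 := by
  by_contra! h
  exact hQ.not_ge (finrank_le_card_of_vanishing_eq_zero W fun w hw hQw =>
    by_contra fun hw0 => absurd hQw (by simpa using h w hw hw0))

theorem exists_pivot_coords [DecidableEq ι] :
    ∃ Q : Finset ι, finrank F W ≤ #Q ∧
      ∀ x ∈ Q, ∃ w ∈ W, w x ≠ 0 ∧ ∀ y ∈ Q.erase x, w y = 0 := by
  classical
  obtain ⟨Q, hQ, hmin⟩ := exists_min_image
    ((univ : Finset (Finset ι)).filter fun Q => ∀ w ∈ W, (∀ x ∈ Q, w x = 0) → w = 0) card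
    ⟨univ, mem_filter.mpr ⟨mem_univ _, fun w _ hw => funext fun x => hw x (mem_univ x)⟩⟩
  simp only [mem_filter, mem_univ, true_and] at hQ hmin
  refine ⟨Q, finrank_le_card_of_vanishing_eq_zero W hQ, fun x hx => ?_⟩
  have hnot : ¬ ∀ w ∈ W, (∀ y ∈ Q.erase x, w y = 0) → w = 0 := fun h =>
    (card_erase_lt_of_mem hx).not_ge (hmin _ h)
  push Not at hnot
  obtain ⟨w, hwW, hw, hw0⟩ := hnot
  refine ⟨w, hwW, fun hwx => hw0 (hQ w hwW fun y hy => ?_), hw⟩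
  by_cases hyx : y = x
  · rwa [hyx]
  · exact hw y (mem_erase.mpr ⟨hyx, hy⟩)

end Coordinates

section StarProduct

variable {F : Type*} [Field F] {n : ℕ} {C D : Submodule F (Fin n → F)}

theorem starProd_comm (C D : Submodule F (Fin n → F)) : starProd C D = starProd D C := by
  unfold starProd starSet
  congr 1
  ext v
  constructor <;> rintro ⟨c, hc, d, hd, rfl⟩ <;>
    exact ⟨d, hd, c, hc, funext fun i => mul_comm _ _⟩

variable [DecidableEq F]

theorem IsMDS.finrank_pos (hC : IsMDS C) : 0 < finrank F C := by
  obtain ⟨v, hvC, hv, -⟩ := hC.1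
  exact finrank_pos_iff_exists_ne_zero.mpr ⟨⟨v, hvC⟩, by simpa using hv⟩

theorem IsMDS.exists_vanishing_ne_zero (hC : IsMDS C) {Z : Finset (Fin n)}
    (hZ : #Z < finrank F C) {x : Fin n} (hx : x ∉ Z) :
    ∃ c ∈ C, (∀ z ∈ Z, c z = 0) ∧ c x ≠ 0 := by
  have hkn : finrank F C ≤ n := by simpa using Submodule.finrank_le C
  obtain ⟨Z', hZZ', hZ'x, hZ'card⟩ :=
    exists_subsuperset_card_eq (s := Z) (t := univ.erase x) (n := finrank F C - 1)
    (fun z hz => mem_erase.mpr ⟨fun h => hx (h ▸ hz), mem_univ z⟩) (by omega)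
    (by rw [card_erase_of_mem (mem_univ x), card_univ, Fintype.card_fin]; omega)
  obtain ⟨c, hcC, hc0, hcZ'⟩ := exists_ne_zero_vanishing_of_card_lt C (Q := Z') (by omega)
  -- `c` has weight at least `n - k + 1 = #Z'ᶜ`, so it is nonzero everywhere off `Z'`.
  have hsupp : univ.filter (c · ≠ 0) = Z'ᶜ := by
    refine eq_of_subset_of_card_le (fun i hi => mem_compl.mpr fun hiZ' => ?_) ?_
    · exact (mem_filter.mp hi).2 (hcZ' i hiZ')
    · have := hC.2 c hcC hc0
      rw [card_compl, Fintype.card_fin, hZ'card]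
      unfold wt at this
      omega
  have hxZ' : x ∈ Z'ᶜ := mem_compl.mpr fun h => (mem_erase.mp (hZ'x h)).1 rfl
  rw [← hsupp] at hxZ'
  exact ⟨c, hcC, fun z hz => hcZ' z (hZZ' hz), (mem_filter.mp hxZ').2⟩

theorem le_finrank_starProd_of_isMDS (hC : IsMDS C) (hD : FullSupport D) :
    min n (finrank F C + finrank F D - 1) ≤ finrank F (starProd C D) := by
  have hk := hC.finrank_pos
  obtain ⟨Q, hlQ, hpiv⟩ := exists_pivot_coords D
  have hQn : #Q ≤ n := by simpa using card_le_univ Q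
  obtain ⟨P, hPQ, hPcard⟩ := exists_subset_card_eq (s := Qᶜ)
    (n := min n (finrank F C + #Q - 1) - #Q) (by rw [card_compl, Fintype.card_fin]; omega)
  have hc (x : Fin n) : ∃ c ∈ C, (∀ z ∈ P.erase x, c z = 0) ∧ c x ≠ 0 :=
    hC.exists_vanishing_ne_zero (by have := card_erase_le (a := x) (s := P); omega)
      (notMem_erase x P)
  have he (x : Fin n) : ∃ e ∈ D, e x ≠ 0 ∧ (x ∈ Q → ∀ y ∈ Q.erase x, e y = 0) := by
    by_cases hx : x ∈ Q
    · obtain ⟨e, heD, hex, heQ⟩ := hpiv x hx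
      exact ⟨e, heD, hex, fun _ => heQ⟩
    · obtain ⟨e, heD, hex⟩ := hD x
      exact ⟨e, heD, hex, fun h => absurd h hx⟩
  choose c hcC hcP hcx using hc
  choose e heD hex heQ using he
  let v : ↥(P ∪ Q) → Fin n → F := fun x i => c x i * e x i
  have hv : LinearIndependent F v := by
    refine linearIndependent_of_triangular v (↑) (fun x => if ↑x ∈ P then 0 else 1)
      (fun x => mul_ne_zero (hcx x) (hex x)) fun x y hxy hr => ?_
    have hne : (x : Fin n) ≠ y := Subtype.coe_ne_coe.mpr hxy
    by_cases hxP : ↑x ∈ P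
    · exact mul_eq_zero_of_left (hcP y x (mem_erase.mpr ⟨hne, hxP⟩)) _
    · have hyP : ↑y ∉ P := fun hyP => by simp [hxP, hyP] at hr
      have hxQ := (mem_union.mp x.2).resolve_left hxP
      have hyQ := (mem_union.mp y.2).resolve_left hyP
      exact mul_eq_zero_of_right _ (heQ y hyQ x (mem_erase.mpr ⟨hne, hxQ⟩))
  have hspan : Submodule.span F (Set.range v) ≤ starProd C D :=
    Submodule.span_le.mpr <| Set.range_subset_iff.mpr fun x =>
      Submodule.subset_span ⟨c x, hcC x, e x, heD x, rfl⟩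
  calc min n (finrank F C + finrank F D - 1) ≤ #P + #Q := by omega
    _ = Fintype.card ↥(P ∪ Q) := by
      rw [Fintype.card_coe,
        card_union_of_disjoint (disjoint_of_subset_left hPQ disjoint_compl_left)]
    _ = finrank F (Submodule.span F (Set.range v)) := (finrank_span_eq_card hv).symm
    _ ≤ finrank F (starProd C D) := Submodule.finrank_mono hspan

end StarProduct

theorem starProd_dim_bound_of_mds_general {F : Type*} [Field F] [DecidableEq F] {n : ℕ}
    (C D : Submodule F (Fin n → F)) (hC : FullSupport C) (hD : FullSupport D)
    (hMDS : IsMDS C ∨ IsMDS D) :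
    min n (Module.finrank F C + Module.finrank F D - 1) ≤
      Module.finrank F (starProd C D) := by
  rcases hMDS with hCMDS | hDMDS
  · exact le_finrank_starProd_of_isMDS hCMDS hD
  · rw [starProd_comm, add_comm]
    exact le_finrank_starProd_of_isMDS hDMDS hC

/-- If `C` and `D` are full-support codes of length `n` and at least one of them is MDS,
then `dim (C ⋆ D) ≥ min {n, dim C + dim D - 1}`. -/
theorem starProd_dim_bound_of_mds {F : Type*} [Field F] [Fintype F] [DecidableEq F] {n : ℕ}
    (C D : Submodule F (Fin n → F)) (hC : FullSupport C) (hD : FullSupport D)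
    (hMDS : IsMDS C ∨ IsMDS D) :
    min n (Module.finrank F C + Module.finrank F D - 1) ≤
      Module.finrank F (starProd C D) :=
  starProd_dim_bound_of_mds_general C D hC hD hMDS
end

section
/- Information-set decodability: if a linear SDMM scheme is decodable from all N responses (i.e., AB = Σ_{i∈[N]} Λ_i ⊗ C̃_i for fixed matrices Λ_i) and I ⊆ [N] is an information set of the code C_A ⋆ C_B containing all response tuples, then there exist matrices Λ_i^I for i ∈ I with AB = Σ_{i∈I} Λ_i^I ⊗ C̃_i for all valid responses C̃. -/
/-!
Injectivity of the restriction to `I` means every coordinate of a codeword is a fixed linear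
combination of its coordinates in `I`: `u j = ∑ i ∈ I, c j i * u i`. Applied entrywise to the
responses and pushed through the bilinear Kronecker product, this gives the decoding matrices
`Λ' i = ∑ j, c j i • Λ j`.
-/

open Kronecker

def matCode {F : Type*} [Field F] {n : ℕ} (t s : ℕ) (C : Submodule F (Fin n → F)) :
    Submodule F (Fin n → Matrix (Fin t) (Fin s) F) where
  carrier := {X | ∀ (a : Fin t) (b : Fin s), (fun i => X i a b) ∈ C}
  add_mem' hx hy a b := by exact C.add_mem (hx a b) (hy a b)
  zero_mem' a b := by
    have : (fun i : Fin n => (0 : Matrix (Fin t) (Fin s) F) a b) = (0 : Fin n → F) := rfl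
    exact this ▸ C.zero_mem
  smul_mem' r x hx a b := by exact C.smul_mem r (hx a b)

theorem Submodule.exists_eq_sum_mul_of_restrict_injective {F ι : Type*} [Field F]
    (C : Submodule F (ι → F)) (I : Finset ι)
    (hinj : ∀ u ∈ C, ∀ v ∈ C, (∀ i ∈ I, u i = v i) → u = v) :
    ∃ c : ι → ι → F, ∀ u ∈ C, ∀ j, u j = ∑ i ∈ I, c j i * u i := by
  classical
  let restrict : C →ₗ[F] (I → F) := LinearMap.pi fun i => LinearMap.proj i.1 ∘ₗ C.subtype
  have hker : LinearMap.ker restrict = ⊥ := LinearMap.ker_eq_bot'.mpr fun u hu =>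
    Subtype.ext (hinj u u.2 0 C.zero_mem fun i hi => congrFun hu ⟨i, hi⟩)
  obtain ⟨g, hg⟩ := restrict.exists_leftInverse_of_injective hker
  -- `c · i` is the codeword whose restriction to `I` is the `i`-th unit vector.
  refine ⟨fun j i => if h : i ∈ I then (g (Pi.single ⟨i, h⟩ 1)).1 j else 0, fun u hu j => ?_⟩
  have hgu : g (restrict ⟨u, hu⟩) = ⟨u, hu⟩ := LinearMap.congr_fun hg _
  calc u j = (LinearMap.proj j ∘ₗ C.subtype ∘ₗ g) (restrict ⟨u, hu⟩) := by simp [hgu]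
    _ = ∑ i : I, u i * (g (Pi.single i 1)).1 j := by
      have hsingle : ∀ i : I, (fun k => if i = k then (1 : F) else 0) = Pi.single i 1 :=
        fun i => funext fun k => by simp [Pi.single_apply, eq_comm]
      rw [LinearMap.pi_apply_eq_sum_univ]
      simp_rw [hsingle]
      simp [restrict]
    _ = ∑ i ∈ I, (if h : i ∈ I then (g (Pi.single ⟨i, h⟩ 1)).1 j else 0) * u i :=
      (Finset.sum_congr rfl fun i _ => by rw [dif_pos i.2, mul_comm]).trans
        (Finset.sum_coe_sort I _)

theorem eq_sum_smul_of_mem_matCode {F : Type*} [Field F] {N t r : ℕ}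
    {C : Submodule F (Fin N → F)} {I : Finset (Fin N)} {c : Fin N → Fin N → F}
    (hc : ∀ u ∈ C, ∀ j, u j = ∑ i ∈ I, c j i * u i)
    {Ct : Fin N → Matrix (Fin t) (Fin r) F} (hCt : Ct ∈ matCode t r C) (j : Fin N) :
    Ct j = ∑ i ∈ I, c j i • Ct i := by
  ext a b
  simpa [Matrix.sum_apply] using hc _ (hCt a b) j

theorem Matrix.kronecker_sum {R ι l m n p : Type*} [CommSemiring R] (A : Matrix l m R)
    (s : Finset ι) (B : ι → Matrix n p R) : A ⊗ₖ ∑ i ∈ s, B i = ∑ i ∈ s, A ⊗ₖ B i :=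
  map_sum (Matrix.kroneckerBilinear (R := R) A) B s

theorem Matrix.sum_kronecker {R ι l m n p : Type*} [CommSemiring R] (s : Finset ι)
    (A : ι → Matrix l m R) (B : Matrix n p R) : (∑ i ∈ s, A i) ⊗ₖ B = ∑ i ∈ s, A i ⊗ₖ B :=
  map_sum ((Matrix.kroneckerBilinear (R := R)).flip B) A s

theorem Matrix.sum_kronecker_eq_of_eq_sum_smul {R ι l m n p : Type*} [CommSemiring R]
    [Fintype ι] (Λ : ι → Matrix l m R) (Ct : ι → Matrix n p R) (I : Finset ι) (c : ι → ι → R)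
    (hCt : ∀ j, Ct j = ∑ i ∈ I, c j i • Ct i) :
    ∑ j, Λ j ⊗ₖ Ct j = ∑ i ∈ I, (∑ j, c j i • Λ j) ⊗ₖ Ct i := by
  calc ∑ j, Λ j ⊗ₖ Ct j = ∑ j, ∑ i ∈ I, c j i • (Λ j ⊗ₖ Ct i) := by
        refine Finset.sum_congr rfl fun j _ => ?_
        rw [hCt j, Matrix.kronecker_sum]
        simp only [Matrix.kronecker_smul]
    _ = ∑ i ∈ I, (∑ j, c j i • Λ j) ⊗ₖ Ct i := by
        rw [Finset.sum_comm]
        simp only [Matrix.sum_kronecker, Matrix.smul_kronecker]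

theorem information_set_decoding_general {F : Type*} [Field F] {N m n t r : ℕ}
    (Ccode : Submodule F (Fin N → F)) (Λ : Fin N → Matrix (Fin m) (Fin n) F)
    (I : Finset (Fin N))
    (hinj : ∀ u ∈ Ccode, ∀ v ∈ Ccode, (∀ i ∈ I, u i = v i) → u = v) :
    ∃ Λ' : Fin N → Matrix (Fin m) (Fin n) F,
      ∀ Ct ∈ matCode t r Ccode,
        ∑ i ∈ I, Λ' i ⊗ₖ Ct i = ∑ i : Fin N, Λ i ⊗ₖ Ct i := by
  obtain ⟨c, hc⟩ := Ccode.exists_eq_sum_mul_of_restrict_injective I hinj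
  refine ⟨fun i => ∑ j, c j i • Λ j, fun Ct hCt => ?_⟩
  exact (Matrix.sum_kronecker_eq_of_eq_sum_smul Λ Ct I c (eq_sum_smul_of_mem_matCode hc hCt)).symm

/-- Information-set decodability: if a linear SDMM scheme is decodable from all `N`
responses via fixed matrices `Λ i`, and `I` is an information set of the code
`C = C_A ⋆ C_B` (the projection of the code onto `I` is injective and `|I| = dim C`),
then there exist matrices `Λ'` such that decoding succeeds using only the responses
indexed by `I`, for every valid response tuple in `Mat(C)`. -/
theorem information_set_decoding {F : Type*} [Field F] [Fintype F] {N m n t r : ℕ}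
    (Ccode : Submodule F (Fin N → F)) (Λ : Fin N → Matrix (Fin m) (Fin n) F)
    (I : Finset (Fin N)) (hcard : I.card = Module.finrank F Ccode)
    (hinj : ∀ u ∈ Ccode, ∀ v ∈ Ccode, (∀ i ∈ I, u i = v i) → u = v) :
    ∃ Λ' : Fin N → Matrix (Fin m) (Fin n) F,
      ∀ Ct ∈ matCode t r Ccode,
        ∑ i ∈ I, Λ' i ⊗ₖ Ct i = ∑ i : Fin N, Λ i ⊗ₖ Ct i :=
  information_set_decoding_general Ccode Λ I hinj
end

section
/- If columns indexed by a set X of the X×N matrix F^sec (the generator of the security part) are linearly dependent while the corresponding columns of the full generator F are linearly independent, and A is uniformly distributed, then I(A; Ã_X) > 0, i.e., the scheme leaks information to the colluding set X. -/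
/-!
A dependency `c` among the security columns indexed by `𝒳` gives a combination `∑ⱼ cⱼ Ãⱼ` in
which the random blocks cancel; since the full columns are independent, what remains is a
nonzero linear form `∑ᵢ eᵢ Aᵢ` of the data. The event `∑ⱼ cⱼ Ãⱼ = 0` is thus determined both by
`A` and by `Ã_𝒳`, and for uniform `A` its probability lies strictly between `0` and `1`, so it
cannot be independent of itself.
-/

open MeasureTheory ProbabilityTheory Matrix

section Independence

variable {Ω α γ : Type*} [MeasurableSpace Ω] {μ : Measure Ω}
  [MeasurableSpace α] [MeasurableSpace γ]

/-- If `A` and `Y` were independent, an event determined by both would be independent of itself,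
hence of probability `0` or `1`. -/
theorem not_indepFun_of_preimage_eq [IsProbabilityMeasure μ] {A : Ω → α} {Y : Ω → γ}
    (hA : Measurable A)
    {s : Set α} {t : Set γ} (hs : MeasurableSet s) (ht : MeasurableSet t)
    (hst : A ⁻¹' s = Y ⁻¹' t) (h0 : μ (A ⁻¹' s) ≠ 0) (h1 : μ (A ⁻¹' s) ≠ 1) :
    ¬ IndepFun A Y μ := by
  intro hAY
  have hself : IndepSet (A ⁻¹' s) (A ⁻¹' s) μ := by
    rw [indepSet_iff_measure_inter_eq_mul (hA hs) (hA hs) μ]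
    have := hAY.measure_inter_preimage_eq_mul s t hs ht
    rwa [← hst] at this
  exact (measure_eq_zero_or_one_of_indepSet_self hself).elim h0 h1

theorem measure_preimage_ne_zero_of_map_eq_uniform [Fintype α] [Nonempty α]
    [DiscreteMeasurableSpace α] {A : Ω → α} (hA : Measurable A)
    (hunif : μ.map A = (PMF.uniformOfFintype α).toMeasure) {s : Set α} (hs : s.Nonempty) :
    μ (A ⁻¹' s) ≠ 0 := by
  rw [← Measure.map_apply hA MeasurableSet.of_discrete, hunif,
    Ne, PMF.toMeasure_apply_eq_zero_iff _ MeasurableSet.of_discrete,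
    PMF.support_uniformOfFintype, Set.top_eq_univ, Set.univ_disjoint]
  exact hs.ne_empty

theorem measure_preimage_ne_one_of_map_eq_uniform [Fintype α] [Nonempty α]
    [DiscreteMeasurableSpace α] {A : Ω → α} (hA : Measurable A)
    (hunif : μ.map A = (PMF.uniformOfFintype α).toMeasure) {s : Set α} (hs : s ≠ Set.univ) :
    μ (A ⁻¹' s) ≠ 1 := by
  rw [← Measure.map_apply hA MeasurableSet.of_discrete, hunif,
    Ne, PMF.toMeasure_apply_eq_one_iff _ MeasurableSet.of_discrete,
    PMF.support_uniformOfFintype, Set.top_eq_univ, Set.univ_subset_iff]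
  exact hs

end Independence

section LinearAlgebra

variable {F ι : Type*} [Field F] [Fintype ι] {M X : ℕ}

theorem exists_mulVec_comp_natAdd_eq_zero_and_comp_castAdd_ne_zero
    {G : Matrix (Fin (M + X)) ι F}
    (hdep : ¬ LinearIndependent F (G.submatrix (Fin.natAdd M) id).col)
    (hind : LinearIndependent F G.col) :
    ∃ c : ι → F, (G *ᵥ c) ∘ Fin.natAdd M = 0 ∧ (G *ᵥ c) ∘ Fin.castAdd X ≠ 0 := by
  rw [← mulVec_injective_iff, ← coe_mulVecLin, ← LinearMap.ker_eq_bot] at hdep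
  obtain ⟨c, hc, hc0⟩ := Submodule.exists_mem_ne_zero_of_ne_bot hdep
  have hsec : (G *ᵥ c) ∘ Fin.natAdd M = 0 := hc
  refine ⟨c, hsec, fun hdata => hc0 (mulVec_injective_iff.mpr hind ?_)⟩
  rw [mulVec_zero]
  funext k
  exact Fin.addCases (congrFun hdata) (congrFun hsec) k

theorem sum_smul_sum_smul_eq_sum_mulVec_smul {κ V : Type*} [Fintype κ] [AddCommGroup V]
    [Module F V] (G : Matrix κ ι F) (c : ι → F) (y : κ → V) :
    ∑ j, c j • ∑ k, G k j • y k = ∑ k, (G *ᵥ c) k • y k := by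
  simp only [Finset.smul_sum, smul_smul, mulVec, dotProduct, Finset.sum_smul]
  rw [Finset.sum_comm]
  simp only [mul_comm]

theorem sum_smul_sum_smul_append_of_mulVec_comp_natAdd_eq_zero {V : Type*} [AddCommGroup V]
    [Module F V] {G : Matrix (Fin (M + X)) ι F} {c : ι → F}
    (hsec : (G *ᵥ c) ∘ Fin.natAdd M = 0) (u : Fin M → V) (r : Fin X → V) :
    ∑ j, c j • ∑ k, G k j • Fin.append u r k = ∑ i, (G *ᵥ c) (Fin.castAdd X i) • u i := by
  have hsec' : ∀ k, (G *ᵥ c) (Fin.natAdd M k) = 0 := congrFun hsec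
  rw [sum_smul_sum_smul_eq_sum_mulVec_smul, Fin.sum_univ_add]
  simp only [Fin.append_left, Fin.append_right, hsec', zero_smul, Finset.sum_const_zero,
    add_zero]

theorem exists_sum_smul_ne_zero {V : Type*} [AddCommGroup V] [Module F V] [Nontrivial V]
    [DecidableEq ι] {e : ι → F} (he : e ≠ 0) : ∃ u : ι → V, ∑ i, e i • u i ≠ 0 := by
  obtain ⟨i, hi⟩ := Function.ne_iff.mp he
  obtain ⟨w, hw⟩ := exists_ne (0 : V)
  refine ⟨Pi.single i w, ?_⟩
  rw [Finset.sum_eq_single i (fun k _ hk => by simp [hk]) (by simp)]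
  simpa using smul_ne_zero hi hw

end LinearAlgebra

theorem leakage_of_dependent_security_columns_general {F : Type*} [Field F] [Fintype F]
    {M X N a b : ℕ} (ha : 0 < a) (hb : 0 < b)
    (Fmat : Fin (M + X) → Fin N → F) (𝒳 : Finset (Fin N))
    {Ω : Type*} [MeasurableSpace Ω] (μ : Measure Ω) [IsProbabilityMeasure μ]
    [MeasurableSpace (Fin M → Matrix (Fin a) (Fin b) F)]
    [DiscreteMeasurableSpace (Fin M → Matrix (Fin a) (Fin b) F)]
    [MeasurableSpace ({x // x ∈ 𝒳} → Matrix (Fin a) (Fin b) F)]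
    [DiscreteMeasurableSpace ({x // x ∈ 𝒳} → Matrix (Fin a) (Fin b) F)]
    (A : Ω → (Fin M → Matrix (Fin a) (Fin b) F))
    (R : Ω → (Fin X → Matrix (Fin a) (Fin b) F))
    (hA : Measurable A)
    (hAunif : μ.map A =
      (PMF.uniformOfFintype (Fin M → Matrix (Fin a) (Fin b) F)).toMeasure)
    (hdep : ¬ LinearIndependent F
      (fun j : {x // x ∈ 𝒳} => fun k : Fin X => Fmat (Fin.natAdd M k) j))
    (hindcols : LinearIndependent F
      (fun j : {x // x ∈ 𝒳} => fun k : Fin (M + X) => Fmat k j)) :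
    ¬ IndepFun A
        (fun ω => fun j : {x // x ∈ 𝒳} =>
          ∑ k : Fin (M + X), Fmat k j • Fin.append (A ω) (R ω) k) μ := by
  classical
  let G : Matrix (Fin (M + X)) {x // x ∈ 𝒳} F := fun k j => Fmat k j
  obtain ⟨c, hsec, hdata⟩ :=
    exists_mulVec_comp_natAdd_eq_zero_and_comp_castAdd_ne_zero (G := G) hdep hindcols
  have : Nonempty (Fin a) := Fin.pos_iff_nonempty.mp ha
  have : Nonempty (Fin b) := Fin.pos_iff_nonempty.mp hb
  obtain ⟨u, hu⟩ := exists_sum_smul_ne_zero (V := Matrix (Fin a) (Fin b) F) hdata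
  refine not_indepFun_of_preimage_eq hA
    (s := {v | ∑ i, ((G *ᵥ c) ∘ Fin.castAdd X) i • v i = 0}) (t := {y | ∑ j, c j • y j = 0})
    .of_discrete .of_discrete ?_ (measure_preimage_ne_zero_of_map_eq_uniform hA hAunif ⟨0, ?_⟩)
    (measure_preimage_ne_one_of_map_eq_uniform hA hAunif
      (Set.ne_univ_iff_exists_notMem _ |>.mpr ⟨u, hu⟩))
  · ext ω
    exact (congrArg (· = 0)
      (sum_smul_sum_smul_append_of_mulVec_comp_natAdd_eq_zero hsec (A ω) (R ω))).to_iff.symm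
  · simp

/-- Leakage from a deficient security code: consider a linear SDMM encoding
`Ã = (A_1, …, A_M, R_1, …, R_X) · F` with generator rows `Fmat : Fin (M+X) → Fin N → F`,
where the data blocks `A` and the random blocks `R` are independent and uniformly
distributed tuples of (nonempty) `a × b` matrices.  If, for a colluding set `𝒳`, the
columns of the security part `F^sec` (the last `X` rows) indexed by `𝒳` are linearly
dependent while the corresponding columns of the full generator `F` are linearly
independent, then `A` is *not* independent of `Ã_𝒳`, i.e. `I(A; Ã_𝒳) > 0`. -/
theorem leakage_of_dependent_security_columns {F : Type*} [Field F] [Fintype F]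
    {M X N a b : ℕ} (ha : 0 < a) (hb : 0 < b)
    (Fmat : Fin (M + X) → Fin N → F) (𝒳 : Finset (Fin N))
    {Ω : Type*} [MeasurableSpace Ω] (μ : Measure Ω) [IsProbabilityMeasure μ]
    [MeasurableSpace (Fin M → Matrix (Fin a) (Fin b) F)]
    [DiscreteMeasurableSpace (Fin M → Matrix (Fin a) (Fin b) F)]
    [MeasurableSpace (Fin X → Matrix (Fin a) (Fin b) F)]
    [DiscreteMeasurableSpace (Fin X → Matrix (Fin a) (Fin b) F)]
    [MeasurableSpace ({x // x ∈ 𝒳} → Matrix (Fin a) (Fin b) F)]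
    [DiscreteMeasurableSpace ({x // x ∈ 𝒳} → Matrix (Fin a) (Fin b) F)]
    (A : Ω → (Fin M → Matrix (Fin a) (Fin b) F))
    (R : Ω → (Fin X → Matrix (Fin a) (Fin b) F))
    (hA : Measurable A) (hR : Measurable R)
    (hAunif : μ.map A =
      (PMF.uniformOfFintype (Fin M → Matrix (Fin a) (Fin b) F)).toMeasure)
    (hRunif : μ.map R =
      (PMF.uniformOfFintype (Fin X → Matrix (Fin a) (Fin b) F)).toMeasure)
    (hAR : IndepFun A R μ)
    (hdep : ¬ LinearIndependent F
      (fun j : {x // x ∈ 𝒳} => fun k : Fin X => Fmat (Fin.natAdd M k) j))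
    (hindcols : LinearIndependent F
      (fun j : {x // x ∈ 𝒳} => fun k : Fin (M + X) => Fmat k j)) :
    ¬ IndepFun A
        (fun ω => fun j : {x // x ∈ 𝒳} =>
          ∑ k : Fin (M + X), Fmat k j • Fin.append (A ω) (R ω) k) μ :=
  leakage_of_dependent_security_columns_general ha hb Fmat 𝒳 μ A R hA hAunif hdep hindcols
end

section
/- A decodable linear SDMM scheme cannot be secure against more than dim C_A^sec colluding workers: concretely, if the X×N matrix F^sec has row rank at most X−1 (so dim C_A^sec ≤ X−1), then the scheme is not X-secure. -/
/-!
If the security rows `g_1, …, g_X` of `F` are dependent, they span a space `W` with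
`dim W < X`. Decodability forces some data row `v` out of `W`: otherwise the randomness can be
chosen so that every share vanishes, although the product `AB` is nonzero. Some `w` then kills
`W` and has `w · v = 1`, and it can be taken with at most `dim W + 1 ≤ X` nonzero entries,
because `(0, 1) ∈ W* × F` is a combination of the vectors `(x ↦ x_ℓ, v_ℓ)` and a spanning
subfamily of these has at most `dim (W* × F) = dim W + 1` members. The workers in the support
of `w` recover the data block of `v` as `∑ w_ℓ Ã_ℓ`; so an event about `A` is also an event
about their shares, and an event independent of itself has probability `0` or `1`.
-/

open MeasureTheory ProbabilityTheory Kronecker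

variable {F : Type*} [Field F] [Fintype F]

/-- Encoding of the `A`-side of a linear SDMM scheme: the data blocks `A` (indexed by the
grid `Fin m × Fin p`) and the random blocks `R` are encoded with the generator `Fmat`. -/
def encode {F : Type*} [Field F] {μdim : Type*} [Fintype μdim]
    {X N a b : ℕ} (Fmat : μdim ⊕ Fin X → Fin N → F)
    (A : μdim → Matrix (Fin a) (Fin b) F) (R : Fin X → Matrix (Fin a) (Fin b) F) :
    Fin N → Matrix (Fin a) (Fin b) F :=
  fun ℓ => (∑ ij, Fmat (Sum.inl ij) ℓ • A ij) + ∑ k, Fmat (Sum.inr k) ℓ • R k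

/-- `X`-security of a linear SDMM scheme: for every probability space, every distribution
of the data `(A, B)`, and independent uniform randomness `(R, S)`, the data is independent
of the encoded shares of any colluding set of at most `X` workers. -/
def XSecure {F : Type*} [Field F] [Fintype F] (m p n X N a b c : ℕ)
    (Fmat : (Fin m × Fin p) ⊕ Fin X → Fin N → F)
    (Gmat : (Fin p × Fin n) ⊕ Fin X → Fin N → F) : Prop :=
  letI : MeasurableSpace (Matrix (Fin a) (Fin b) F) := ⊤
  letI : MeasurableSpace (Matrix (Fin b) (Fin c) F) := ⊤
  ∀ (Ω : Type) (_ : MeasurableSpace Ω) (μ : Measure Ω), IsProbabilityMeasure μ →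
    ∀ (A : Ω → (Fin m × Fin p → Matrix (Fin a) (Fin b) F))
      (B : Ω → (Fin p × Fin n → Matrix (Fin b) (Fin c) F))
      (R : Ω → (Fin X → Matrix (Fin a) (Fin b) F))
      (S : Ω → (Fin X → Matrix (Fin b) (Fin c) F)),
      Measurable A → Measurable B → Measurable R → Measurable S →
      μ.map (fun ω => (R ω, S ω)) =
        (PMF.uniformOfFintype
          ((Fin X → Matrix (Fin a) (Fin b) F) × (Fin X → Matrix (Fin b) (Fin c) F))).toMeasure →
      IndepFun (fun ω => (A ω, B ω)) (fun ω => (R ω, S ω)) μ →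
      ∀ 𝒳 : Finset (Fin N), 𝒳.card ≤ X →
        IndepFun (fun ω => (A ω, B ω))
          (fun ω => fun j : {x // x ∈ 𝒳} =>
            (encode Fmat (A ω) (R ω) j, encode Gmat (B ω) (S ω) j)) μ

open Submodule Set Module

theorem exists_finset_card_le_finrank_sum_smul_eq {ι K V : Type*} [DivisionRing K]
    [AddCommGroup V] [Module K V] [FiniteDimensional K V] {v : ι → V} {x : V}
    (hx : x ∈ span K (range v)) :
    ∃ (t : Finset ι) (c : ι → K), t.card ≤ finrank K V ∧ ∑ i ∈ t, c i • v i = x := by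
  classical
  obtain ⟨b, -, -, hspan, hli⟩ :=
    exists_linearIndepOn_extension (linearIndepOn_empty K v) (empty_subset univ)
  rw [← image_univ] at hx
  obtain ⟨t, htb, c, rfl⟩ := (mem_span_image_iff_exists_fun K).mp (span_le.mpr hspan hx)
  refine ⟨t, fun i ↦ if h : i ∈ t then c ⟨i, h⟩ else 0, ?_, ?_⟩
  · simpa using (hli.mono htb).linearIndependent.fintype_card_le_finrank
  · rw [← Finset.sum_coe_sort]
    simp

theorem exists_finset_sum_mul_eq_one_of_notMem {ι K : Type*} [Field K] [Fintype ι]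
    {W : Submodule K (ι → K)} {v : ι → K} (hv : v ∉ W) :
    ∃ (s : Finset ι) (w : ι → K), s.card ≤ finrank K W + 1 ∧
      (∀ u ∈ W, ∑ i ∈ s, w i * u i = 0) ∧ ∑ i ∈ s, w i * v i = 1 := by
  classical
  obtain ⟨f, hfv, hWf⟩ := exists_le_ker_of_notMem hv
  have hf : ∀ x, ∑ i, f (Pi.single i 1) * x i = f x := fun x ↦ by
    rw [LinearMap.pi_apply_eq_sum_univ f x]
    refine Finset.sum_congr rfl fun i _ ↦ ?_
    rw [smul_eq_mul, mul_comm]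
    congr 2
    ext j
    simp [Pi.single_apply, eq_comm]
  let col : ι → Dual K W × K := fun i ↦ ((LinearMap.proj i).domRestrict W, v i)
  have hmem : ((0 : Dual K W), (1 : K)) ∈ span K (range col) := by
    rw [mem_span_range_iff_exists_fun]
    refine ⟨fun i ↦ (f v)⁻¹ * f (Pi.single i 1), Prod.ext (LinearMap.ext fun u ↦ ?_) ?_⟩
    · simp [col, Prod.fst_sum, mul_assoc, ← Finset.mul_sum, hf, LinearMap.mem_ker.mp (hWf u.2)]
    · simp [col, Prod.snd_sum, mul_assoc, ← Finset.mul_sum, hf, hfv]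
  obtain ⟨s, w, hs, hsum⟩ := exists_finset_card_le_finrank_sum_smul_eq hmem
  refine ⟨s, w, ?_, fun u hu ↦ ?_, ?_⟩
  · simpa [Module.finrank_prod, Subspace.dual_finrank_eq] using hs
  · simpa [col, Prod.fst_sum] using congr($(congrArg Prod.fst hsum) ⟨u, hu⟩)
  · simpa [col, Prod.snd_sum] using congrArg Prod.snd hsum

section Encoding

variable {K ι : Type*} [Field K] [Fintype ι] {X N a b : ℕ} (Fmat : ι ⊕ Fin X → Fin N → K)

theorem sum_smul_encode (s : Finset (Fin N)) (w : Fin N → K) (A : ι → Matrix (Fin a) (Fin b) K)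
    (R : Fin X → Matrix (Fin a) (Fin b) K) :
    ∑ ℓ ∈ s, w ℓ • encode Fmat A R ℓ =
      ∑ ij, (∑ ℓ ∈ s, w ℓ * Fmat (.inl ij) ℓ) • A ij +
        ∑ k, (∑ ℓ ∈ s, w ℓ * Fmat (.inr k) ℓ) • R k := by
  simp only [encode, smul_add, Finset.sum_add_distrib, Finset.smul_sum, smul_smul,
    Finset.sum_smul]
  rw [Finset.sum_comm (s := s), Finset.sum_comm (s := s)]

theorem exists_encode_eq_zero_of_forall_mem_span
    (h : ∀ ij, Fmat (.inl ij) ∈ span K (range fun k ↦ Fmat (.inr k)))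
    (A : ι → Matrix (Fin a) (Fin b) K) : ∃ R, encode Fmat A R = 0 := by
  choose coef hcoef using fun ij ↦ (mem_span_range_iff_exists_fun K).mp (h ij)
  refine ⟨fun k ↦ -∑ ij, coef ij k • A ij, funext fun ℓ ↦ ?_⟩
  simp only [encode, ← hcoef, Finset.sum_apply, Pi.smul_apply, smul_eq_mul, Finset.sum_smul,
    Finset.smul_sum, smul_neg, smul_smul, Finset.sum_neg_distrib, Pi.zero_apply]
  rw [Finset.sum_comm, add_neg_eq_zero]
  simp only [mul_comm]

end Encoding

def IsDecodable {K : Type*} [Field K] {m p n X N : ℕ} (a b c : ℕ)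
    (Fmat : (Fin m × Fin p) ⊕ Fin X → Fin N → K)
    (Gmat : (Fin p × Fin n) ⊕ Fin X → Fin N → K) : Prop :=
  ∃ Λ : Fin N → Matrix (Fin m) (Fin n) K,
    ∀ (A : Fin m × Fin p → Matrix (Fin a) (Fin b) K)
      (B : Fin p × Fin n → Matrix (Fin b) (Fin c) K)
      (R : Fin X → Matrix (Fin a) (Fin b) K)
      (S : Fin X → Matrix (Fin b) (Fin c) K),
      (fun (x : Fin m × Fin a) (y : Fin n × Fin c) =>
          (∑ j : Fin p, A (x.1, j) * B (j, y.1)) x.2 y.2) =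
        ∑ ℓ : Fin N, Λ ℓ ⊗ₖ (encode Fmat A R ℓ * encode Gmat B S ℓ)

theorem IsDecodable.exists_notMem_span {K : Type*} [Field K] {m p n X N a b c : ℕ}
    (ha : 0 < a) (hb : 0 < b) (hc : 0 < c) (hm : 0 < m) (hn : 0 < n) (hp : 0 < p)
    {Fmat : (Fin m × Fin p) ⊕ Fin X → Fin N → K} {Gmat : (Fin p × Fin n) ⊕ Fin X → Fin N → K}
    (hdec : IsDecodable a b c Fmat Gmat) :
    ∃ ij, Fmat (.inl ij) ∉ span K (range fun k ↦ Fmat (.inr k)) := by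
  by_contra! hspan
  obtain ⟨Λ, hΛ⟩ := hdec
  let a₀ : Fin a := ⟨0, ha⟩
  let b₀ : Fin b := ⟨0, hb⟩
  let c₀ : Fin c := ⟨0, hc⟩
  let j₀ : Fin p := ⟨0, hp⟩
  let A : Fin m × Fin p → Matrix (Fin a) (Fin b) K := fun _ ↦ Matrix.single a₀ b₀ 1
  obtain ⟨R, hR⟩ := exists_encode_eq_zero_of_forall_mem_span Fmat hspan A
  have h := congrFun₂ (hΛ A (fun jk ↦ if jk.1 = j₀ then Matrix.single b₀ c₀ 1 else 0) R 0)
    (⟨0, hm⟩, a₀) (⟨0, hn⟩, c₀)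
  simp [hR, A, Matrix.sum_apply, apply_ite (fun M : Matrix (Fin b) (Fin c) K ↦ M b₀ c₀)] at h

theorem not_XSecure_of_separated_shares {K : Type*} [Field K] [Fintype K]
    {m p n X N a b c : ℕ} (Fmat : (Fin m × Fin p) ⊕ Fin X → Fin N → K)
    (Gmat : (Fin p × Fin n) ⊕ Fin X → Fin N → K) {𝒳 : Finset (Fin N)} (h𝒳 : 𝒳.card ≤ X)
    (A₀ A₁ : Fin m × Fin p → Matrix (Fin a) (Fin b) K) (T : Set (𝒳 → Matrix (Fin a) (Fin b) K))
    (h₀ : ∀ R, (fun j : 𝒳 ↦ encode Fmat A₀ R j) ∉ T)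
    (h₁ : ∀ R, (fun j : 𝒳 ↦ encode Fmat A₁ R j) ∈ T) :
    ¬ XSecure m p n X N a b c Fmat Gmat := by
  intro hsec
  let : MeasurableSpace (Matrix (Fin a) (Fin b) K) := ⊤
  let : MeasurableSpace (Matrix (Fin b) (Fin c) K) := ⊤
  let P := (Fin X → Matrix (Fin a) (Fin b) K) × (Fin X → Matrix (Fin b) (Fin c) K)
  let e := Fintype.equivFin P
  -- `XSecure` quantifies over `Ω : Type`, so the randomness `P` is transported to `Fin (card P)`.
  let μ : Measure (Bool × Fin (Fintype.card P)) :=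
    (PMF.uniformOfFintype Bool).toMeasure.prod ((PMF.uniformOfFintype P).map e).toMeasure
  let data (t : Bool) : (Fin m × Fin p → Matrix (Fin a) (Fin b) K) ×
      (Fin p × Fin n → Matrix (Fin b) (Fin c) K) := (if t then A₁ else A₀, 0)
  have hmap : μ.map (e.symm ∘ Prod.snd) = (PMF.uniformOfFintype P).toMeasure := by
    rw [← Measure.map_map (measurable_of_countable e.symm) measurable_snd, Measure.map_snd_prod,
      measure_univ, one_smul, PMF.toMeasure_map _ _ (measurable_of_countable _), PMF.map_comp,
      e.symm_comp_self, PMF.map_id]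
  have hind := hsec _ _ μ inferInstance (fun ω ↦ (data ω.1).1) (fun ω ↦ (data ω.1).2)
    (fun ω ↦ (e.symm ω.2).1) (fun ω ↦ (e.symm ω.2).2) (measurable_of_countable _)
    (measurable_of_countable _) (measurable_of_countable _) (measurable_of_countable _) hmap
    (indepFun_prod (measurable_of_countable data) (measurable_of_countable e.symm)) 𝒳 h𝒳
  let E : Set (Bool × Fin (Fintype.card P)) := {true} ×ˢ univ
  have hE : IndepSet E E μ := by
    convert (indepFun_iff_indepSet_preimage (measurable_of_countable _)
      (measurable_of_countable _)).mp hind {d | (fun j : 𝒳 ↦ encode Fmat d.1 0 j) ∈ T}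
      {y | (fun j ↦ (y j).1) ∈ T} (to_countable _).measurableSet (to_countable _).measurableSet
      using 1 <;> ext ⟨_ | _, _⟩ <;> simp [E, data, h₀, h₁]
  have hhalf : μ E = 2⁻¹ := by
    simp [E, μ, Measure.prod_prod]
  rcases measure_eq_zero_or_one_of_indepSet_self hE with h | h <;> simp [hhalf] at h

theorem not_XSecure_of_sum_mul_eq_one {K : Type*} [Field K] [Fintype K]
    {m p n X N a b c : ℕ} (ha : 0 < a) (hb : 0 < b) (Fmat : (Fin m × Fin p) ⊕ Fin X → Fin N → K)
    (Gmat : (Fin p × Fin n) ⊕ Fin X → Fin N → K) {𝒳 : Finset (Fin N)} (h𝒳 : 𝒳.card ≤ X)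
    {w : Fin N → K} {ij₀ : Fin m × Fin p} (hrand : ∀ k, ∑ ℓ ∈ 𝒳, w ℓ * Fmat (.inr k) ℓ = 0)
    (hdata : ∑ ℓ ∈ 𝒳, w ℓ * Fmat (.inl ij₀) ℓ = 1) :
    ¬ XSecure m p n X N a b c Fmat Gmat := by
  have : Nonempty (Fin a) := ⟨⟨0, ha⟩⟩
  have : Nonempty (Fin b) := ⟨⟨0, hb⟩⟩
  obtain ⟨M, hM⟩ := exists_ne (0 : Matrix (Fin a) (Fin b) K)
  have hrecover : ∀ (A : Fin m × Fin p → Matrix (Fin a) (Fin b) K) R,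
      ∑ j : 𝒳, w j • encode Fmat A R j =
      ∑ ij, (∑ ℓ ∈ 𝒳, w ℓ * Fmat (.inl ij) ℓ) • A ij := fun A R ↦ by
    rw [Finset.sum_coe_sort 𝒳 (fun ℓ ↦ w ℓ • encode Fmat A R ℓ), sum_smul_encode]
    simp [hrand]
  refine not_XSecure_of_separated_shares Fmat Gmat h𝒳 0 (Pi.single ij₀ M)
    {s | ∑ j : 𝒳, w j • s j = M} (fun R ↦ ?_) (fun R ↦ ?_)
  · simpa only [mem_ofPred_eq, hrecover, Pi.zero_apply, smul_zero, Finset.sum_const_zero]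
      using hM.symm
  · rw [mem_ofPred_eq, hrecover, Finset.sum_eq_single ij₀ (fun ij _ hij ↦ by simp [hij])
      (by simp)]
    simp [hdata]

/-- A decodable linear SDMM scheme whose security generator `F^sec` has row rank at most
`X - 1` (i.e. the last `X` rows of `F` are linearly dependent, so `dim C_A^sec ≤ X - 1`)
is not `X`-secure. -/
theorem not_X_secure_of_rank_deficient_security {F : Type*} [Field F] [Fintype F]
    {m p n X N a b c : ℕ} (ha : 0 < a) (hb : 0 < b) (hc : 0 < c)
    (hm : 0 < m) (hn : 0 < n) (hp : 0 < p)
    (Fmat : (Fin m × Fin p) ⊕ Fin X → Fin N → F)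
    (Gmat : (Fin p × Fin n) ⊕ Fin X → Fin N → F)
    (hdec : ∃ Λ : Fin N → Matrix (Fin m) (Fin n) F,
      ∀ (A : Fin m × Fin p → Matrix (Fin a) (Fin b) F)
        (B : Fin p × Fin n → Matrix (Fin b) (Fin c) F)
        (R : Fin X → Matrix (Fin a) (Fin b) F)
        (S : Fin X → Matrix (Fin b) (Fin c) F),
        (fun (x : Fin m × Fin a) (y : Fin n × Fin c) =>
            (∑ j : Fin p, A (x.1, j) * B (j, y.1)) x.2 y.2) =
          ∑ ℓ : Fin N, Λ ℓ ⊗ₖ (encode Fmat A R ℓ * encode Gmat B S ℓ))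
    (hrank : ¬ LinearIndependent F (fun k : Fin X => fun ℓ : Fin N => Fmat (Sum.inr k) ℓ)) :
    ¬ XSecure m p n X N a b c Fmat Gmat := by
  obtain ⟨ij₀, hij₀⟩ := IsDecodable.exists_notMem_span ha hb hc hm hn hp hdec
  obtain ⟨𝒳, w, h𝒳, hW, hdata⟩ := exists_finset_sum_mul_eq_one_of_notMem hij₀
  have hX : (range fun k ↦ Fmat (.inr k)).finrank F < X := by
    simpa using (finrank_range_le_card (R := F) (fun k ↦ Fmat (.inr k))).lt_of_ne
      fun h ↦ hrank (linearIndependent_iff_card_eq_finrank_span.mpr h.symm)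
  exact not_XSecure_of_sum_mul_eq_one ha hb Fmat Gmat (h𝒳.trans hX)
    (fun k ↦ hW _ (subset_span (mem_range_self k))) hdata
end

section
/- Lower bound on recovery threshold: for a decodable, X-secure linear SDMM scheme with codes C_A and C_B of length N and dimensions mp+X and np+X, the recovery threshold R = N − D + 1, where D is the minimum distance of C_A ⋆ C_B, satisfies R ≥ min{N, (m+n)p + 2X − 1}. -/
/-! With `k_A = mp + X` and `k_B = np + X`, the claim `R ≥ min N (k_A + k_B - 1)` is the product
Singleton bound `d(C_A ⋆ C_B) ≤ max 1 (N - k_A - k_B + 2)` rewritten. That bound is proved by strong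
induction on a set `S` of coordinates carrying both codes. If every word of `A` vanishes at some
`i ∈ S`, drop `i`: this costs `B` at most one dimension. If `A` is a line spanned by a word without
zeros on `S`, multiplying by it preserves weights and the classical Singleton bound for `B` is
enough. Otherwise `A` has a nonzero word whose support `T` is a proper subset of `S`; apply the
induction to `A` shortened to `T` against `B` punctured to `T`, and to `A` punctured to `S \ T`
against `B` shortened to `S \ T`. The dimensions lost in the two reductions add up to what is
needed, so one of the two words found meets the bound. -/

open Module Finset

namespace LinearCode

variable {F ι : Type*} [Field F]

variable (F) in
def supported (S : Finset ι) : Submodule F (ι → F) :=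
  ⨅ i ∈ (↑S : Set ι)ᶜ, LinearMap.ker (LinearMap.proj i)

theorem mem_supported {S : Finset ι} {v : ι → F} : v ∈ supported F S ↔ ∀ i ∉ S, v i = 0 := by
  simp [supported]

theorem finrank_supported [DecidableEq ι] (S : Finset ι) : finrank F (supported F S) = #S := by
  rw [supported, (LinearMap.iInfKerProjEquiv F (fun _ : ι => F)
    (disjoint_compl_right (a := (S : Set ι))) (by simp)).finrank_eq]
  simp

theorem supported_mono {S T : Finset ι} (h : S ⊆ T) : supported F S ≤ supported F T :=
  fun _ hv => mem_supported.2 fun i hi => mem_supported.1 hv i fun hiS => hi (h hiS)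

theorem supported_univ [Fintype ι] : supported F (univ : Finset ι) = ⊤ :=
  eq_top_iff.2 fun _ _ => mem_supported.2 fun i hi => absurd (mem_univ i) hi

theorem mul_mem_supported_left {S : Finset ι} {a : ι → F} (ha : a ∈ supported F S) (b : ι → F) :
    a * b ∈ supported F S :=
  mem_supported.2 fun i hi => by simp [mem_supported.1 ha i hi]

theorem mul_mem_supported_right {S : Finset ι} (a : ι → F) {b : ι → F} (hb : b ∈ supported F S) :
    a * b ∈ supported F S :=
  mul_comm b a ▸ mul_mem_supported_left hb a

theorem mul_ne_bot_of_apply_ne_zero {A B : Submodule F (ι → F)} {a b : ι → F} (ha : a ∈ A)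
    (hb : b ∈ B) {i : ι} (hai : a i ≠ 0) (hbi : b i ≠ 0) : A * B ≠ ⊥ :=
  (Submodule.ne_bot_iff _).2
    ⟨a * b, Submodule.mul_mem_mul ha hb, fun h => mul_ne_zero hai hbi (congrFun h i)⟩

section Puncture

variable [DecidableEq ι]

variable (F) in
/-- Puncturing to `S`, realised inside `ι → F` by zeroing the coordinates outside `S`. -/
def puncture (S : Finset ι) : (ι → F) →ₗ[F] ι → F :=
  LinearMap.pi fun i => if i ∈ S then LinearMap.proj i else 0

theorem puncture_apply (S : Finset ι) (v : ι → F) (i : ι) :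
    puncture F S v i = if i ∈ S then v i else 0 := by
  by_cases hi : i ∈ S <;> simp [puncture, hi]

theorem puncture_mem_supported (S : Finset ι) (v : ι → F) : puncture F S v ∈ supported F S :=
  mem_supported.2 fun i hi => by simp [puncture_apply, hi]

theorem puncture_of_mem_supported {S : Finset ι} {v : ι → F} (hv : v ∈ supported F S) :
    puncture F S v = v := by
  ext i
  by_cases hi : i ∈ S
  · simp [puncture_apply, hi]
  · simp [puncture_apply, hi, mem_supported.1 hv i hi]

theorem map_puncture_le (S : Finset ι) (C : Submodule F (ι → F)) :
    C.map (puncture F S) ≤ supported F S := by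
  rintro _ ⟨v, -, rfl⟩
  exact puncture_mem_supported S v

theorem map_puncture_of_le_supported {S : Finset ι} {C : Submodule F (ι → F)}
    (hC : C ≤ supported F S) : C.map (puncture F S) = C := by
  ext v
  constructor
  · rintro ⟨w, hw, rfl⟩
    rwa [puncture_of_mem_supported (hC hw)]
  · exact fun hv => ⟨v, hv, puncture_of_mem_supported (hC hv)⟩

theorem puncture_mul (S : Finset ι) (a b : ι → F) :
    puncture F S (a * b) = puncture F S a * puncture F S b := by
  ext i
  by_cases hi : i ∈ S <;> simp [puncture_apply, hi]

theorem map_puncture_mul (S : Finset ι) (A B : Submodule F (ι → F)) :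
    (A * B).map (puncture F S) = A.map (puncture F S) * B.map (puncture F S) := by
  apply le_antisymm
  · rw [Submodule.map_le_iff_le_comap, Submodule.mul_le]
    intro a ha b hb
    rw [Submodule.mem_comap, puncture_mul]
    exact Submodule.mul_mem_mul (Submodule.mem_map_of_mem ha) (Submodule.mem_map_of_mem hb)
  · rw [Submodule.mul_le]
    rintro _ ⟨a, ha, rfl⟩ _ ⟨b, hb, rfl⟩
    exact ⟨a * b, Submodule.mul_mem_mul ha hb, puncture_mul S a b⟩

end Puncture

theorem _root_.Submodule.finrank_map_add_finrank_inf_ker {K V W : Type*} [DivisionRing K]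
    [AddCommGroup V] [Module K V] [AddCommGroup W] [Module K W] (C : Submodule K V)
    [FiniteDimensional K C] (f : V →ₗ[K] W) :
    finrank K (C.map f) + finrank K (C ⊓ LinearMap.ker f : Submodule K V) = finrank K C := by
  rw [← LinearMap.range_domRestrict, ← Submodule.map_comap_subtype,
    Submodule.finrank_map_subtype_eq, ← LinearMap.ker_domRestrict]
  exact LinearMap.finrank_range_add_finrank_ker _

variable [Fintype ι] [DecidableEq ι]

theorem finrank_le_finrank_map_puncture_add {S T : Finset ι} {C : Submodule F (ι → F)}
    (hC : C ≤ supported F S) :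
    finrank F C ≤ finrank F (C.map (puncture F T))
      + finrank F (C ⊓ supported F (S \ T) : Submodule F (ι → F)) := by
  rw [← (C.finrank_map_add_finrank_inf_ker (puncture F T))]
  refine add_le_add_right (Submodule.finrank_mono ?_) _
  rintro v ⟨hvC, hvT⟩
  refine ⟨hvC, mem_supported.2 fun i hi => ?_⟩
  by_cases hiT : i ∈ T
  · simpa [puncture_apply, hiT] using congrFun (LinearMap.mem_ker.1 hvT) i
  · exact mem_supported.1 (hC hvC) i fun hiS => hi (mem_sdiff.2 ⟨hiS, hiT⟩)

theorem finrank_le_card_of_le_supported {S : Finset ι} {C : Submodule F (ι → F)}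
    (hC : C ≤ supported F S) : finrank F C ≤ #S :=
  finrank_supported (F := F) S ▸ Submodule.finrank_mono hC

variable [DecidableEq F]

theorem hammingNorm_le_card_of_mem_supported {S : Finset ι} {v : ι → F}
    (hv : v ∈ supported F S) : hammingNorm v ≤ #S :=
  card_le_card fun i hi => by
    by_contra hiS
    exact (mem_filter.1 hi).2 (mem_supported.1 hv i hiS)

/-- The Singleton bound, for a code supported on `S`. -/
theorem exists_hammingNorm_add_finrank_le {S : Finset ι} {C : Submodule F (ι → F)}
    (hC : C ≤ supported F S) (hC0 : C ≠ ⊥) :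
    ∃ c ∈ C, c ≠ 0 ∧ hammingNorm c + finrank F C ≤ #S + 1 := by
  have hk := finrank_le_card_of_le_supported hC
  have hk0 : 1 ≤ finrank F C := Submodule.one_le_finrank_iff.2 hC0
  obtain ⟨U, hUS, hU⟩ := exists_subset_card_eq (s := S) (n := #S + 1 - finrank F C) (by omega)
  -- `C` and `supported U` have dimensions adding up to more than that of `supported S`.
  have hsup := finrank_le_card_of_le_supported (sup_le hC (supported_mono hUS))
  have hinf := Submodule.finrank_sup_add_finrank_inf_eq C (supported F U)
  rw [finrank_supported] at hinf
  obtain ⟨c, ⟨hcC, hcU⟩, hc0⟩ :=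
    (Submodule.ne_bot_iff _).1 (Submodule.one_le_finrank_iff.1 (by omega : 1 ≤ finrank F
      (C ⊓ supported F U : Submodule F (ι → F))))
  have := hammingNorm_le_card_of_mem_supported hcU
  exact ⟨c, hcC, hc0, by omega⟩

theorem hammingNorm_mul_of_ne_zero {S : Finset ι} {a b : ι → F} (ha : ∀ i ∈ S, a i ≠ 0)
    (hb : b ∈ supported F S) : hammingNorm (a * b) = hammingNorm b := by
  unfold hammingNorm
  congr 1
  ext i
  by_cases hi : i ∈ S
  · simp [ha i hi]
  · simp [mem_supported.1 hb i hi]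

variable (F) in
def ProductSingletonBound (S : Finset ι) : Prop :=
  ∀ A B : Submodule F (ι → F), A ≤ supported F S → B ≤ supported F S → A * B ≠ ⊥ →
    ∃ v ∈ A * B, v ≠ 0 ∧
      (hammingNorm v ≤ 1 ∨ hammingNorm v + finrank F A + finrank F B ≤ #S + 2)

namespace ProductSingletonBound

variable {S T : Finset ι} {A B : Submodule F (ι → F)}

theorem exists_of_mul_le_supported (hT : ProductSingletonBound F T) (hAB : A * B ≠ ⊥)
    (hle : A * B ≤ supported F T) :
    ∃ v ∈ A * B, v ≠ 0 ∧ (hammingNorm v ≤ 1 ∨ hammingNorm v + finrank F (A.map (puncture F T))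
      + finrank F (B.map (puncture F T)) ≤ #T + 2) := by
  have hmap : A.map (puncture F T) * B.map (puncture F T) = A * B := by
    rw [← map_puncture_mul, map_puncture_of_le_supported hle]
  rw [← hmap] at hAB ⊢
  exact hT _ _ (map_puncture_le T A) (map_puncture_le T B) hAB

theorem exists_of_le_supported_left (hT : ProductSingletonBound F T) (hTS : T ⊆ S)
    (hA : A ≤ supported F T) (hB : B ≤ supported F S) (hAB : A * B ≠ ⊥) :
    ∃ v ∈ A * B, v ≠ 0 ∧
      (hammingNorm v ≤ 1 ∨ hammingNorm v + finrank F A + finrank F B ≤ #S + 2) := by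
  have hle : A * B ≤ supported F T :=
    Submodule.mul_le.2 fun a ha b _ => mul_mem_supported_left (hA ha) b
  obtain ⟨v, hv, hv0, hbound⟩ := hT.exists_of_mul_le_supported hAB hle
  rw [map_puncture_of_le_supported hA] at hbound
  have hkB := finrank_le_finrank_map_puncture_add (T := T) hB
  have hsdiff := finrank_le_card_of_le_supported (inf_le_right : B ⊓ supported F (S \ T) ≤ _)
  have := card_sdiff_add_card_eq_card hTS
  exact ⟨v, hv, hv0, by omega⟩

theorem exists_of_shorten_left (hT : ProductSingletonBound F T) {a : ι → F} (haA : a ∈ A)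
    (haT : a ∈ supported F T) (ha : ∀ i ∈ T, a i ≠ 0) (hB : B.map (puncture F T) ≠ ⊥) :
    ∃ v ∈ A * B, v ≠ 0 ∧ (hammingNorm v ≤ 1 ∨ hammingNorm v
      + finrank F (A ⊓ supported F T : Submodule F (ι → F))
      + finrank F (B.map (puncture F T)) ≤ #T + 2) := by
  obtain ⟨_, ⟨b, hbB, rfl⟩, hb0⟩ := (Submodule.ne_bot_iff _).1 hB
  obtain ⟨i, hi⟩ := Function.ne_iff.1 hb0
  have hiT : i ∈ T := by
    by_contra h
    simp [puncture_apply, h] at hi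
  have hle : (A ⊓ supported F T) * B ≤ supported F T :=
    Submodule.mul_le.2 fun x hx y _ => mul_mem_supported_left hx.2 y
  have hne := mul_ne_bot_of_apply_ne_zero (Submodule.mem_inf.2 ⟨haA, haT⟩) hbB (ha i hiT)
    (by simpa [puncture_apply, hiT] using hi)
  obtain ⟨v, hv, hv0, hbound⟩ := hT.exists_of_mul_le_supported hne hle
  rw [map_puncture_of_le_supported inf_le_right] at hbound
  exact ⟨v, mul_le_mul_left inf_le_left B hv, hv0, hbound⟩

theorem exists_of_shorten_right (hT : ProductSingletonBound F T)
    (hfull : ∀ i ∈ T, ∃ a ∈ A, a i ≠ 0) (hB : B ⊓ supported F T ≠ ⊥) :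
    ∃ v ∈ A * B, v ≠ 0 ∧ (hammingNorm v ≤ 1 ∨ hammingNorm v + finrank F (A.map (puncture F T))
      + finrank F (B ⊓ supported F T : Submodule F (ι → F)) ≤ #T + 2) := by
  obtain ⟨b, hb, hb0⟩ := (Submodule.ne_bot_iff _).1 hB
  obtain ⟨i, hi⟩ := Function.ne_iff.1 hb0
  have hiT : i ∈ T := by
    by_contra h
    exact hi (mem_supported.1 hb.2 i h)
  obtain ⟨a, haA, hai⟩ := hfull i hiT
  have hle : A * (B ⊓ supported F T) ≤ supported F T :=
    Submodule.mul_le.2 fun x _ y hy => mul_mem_supported_right x hy.2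
  obtain ⟨v, hv, hv0, hbound⟩ :=
    hT.exists_of_mul_le_supported (mul_ne_bot_of_apply_ne_zero haA hb hai hi) hle
  rw [map_puncture_of_le_supported (inf_le_right : B ⊓ supported F T ≤ _)] at hbound
  exact ⟨v, mul_le_mul_right inf_le_left A hv, hv0, hbound⟩

end ProductSingletonBound

variable {S : Finset ι} {A B : Submodule F (ι → F)}

theorem exists_mem_mul_of_finrank_eq_one (hfull : ∀ i ∈ S, ∃ a ∈ A, a i ≠ 0)
    (hkA : finrank F A = 1) (hB : B ≤ supported F S) (hB0 : B ≠ ⊥) :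
    ∃ v ∈ A * B, v ≠ 0 ∧ hammingNorm v + finrank F A + finrank F B ≤ #S + 2 := by
  obtain ⟨⟨a, haA⟩, -, hspan⟩ := finrank_eq_one_iff'.1 hkA
  have ha : ∀ i ∈ S, a i ≠ 0 := fun i hi hai => by
    obtain ⟨a', ha'A, ha'i⟩ := hfull i hi
    obtain ⟨c, hc⟩ := hspan ⟨a', ha'A⟩
    have := congrFun (congrArg Subtype.val hc) i
    simp only [SetLike.val_smul, Pi.smul_apply, hai, smul_zero] at this
    exact ha'i this.symm
  obtain ⟨b, hbB, hb0, hb⟩ := exists_hammingNorm_add_finrank_le hB hB0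
  have hwt := hammingNorm_mul_of_ne_zero ha (hB hbB)
  refine ⟨a * b, Submodule.mul_mem_mul haA hbB, ?_, by omega⟩
  rw [← hammingNorm_ne_zero_iff, hwt]
  exact hammingNorm_ne_zero_iff.2 hb0

theorem exists_mem_mul_of_full_support (IH : ∀ T ⊂ S, ProductSingletonBound F T)
    (hA : A ≤ supported F S) (hB : B ≤ supported F S) (hB0 : B ≠ ⊥)
    (hfull : ∀ i ∈ S, ∃ a ∈ A, a i ≠ 0) (hkA : 2 ≤ finrank F A) :
    ∃ v ∈ A * B, v ≠ 0 ∧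
      (hammingNorm v ≤ 1 ∨ hammingNorm v + finrank F A + finrank F B ≤ #S + 2) := by
  obtain ⟨a, haA, ha0, hwa⟩ :=
    exists_hammingNorm_add_finrank_le hA (Submodule.one_le_finrank_iff.1 (by omega))
  set T := univ.filter fun i => a i ≠ 0
  have hTa : #T = hammingNorm a := rfl
  have haT : a ∈ supported F T := mem_supported.2 fun i hi => by simpa [T] using hi
  have hTS : T ⊆ S := fun i hi => by
    by_contra h
    exact (mem_filter.1 hi).2 (mem_supported.1 (hA haA) i h)
  have hTS_ssubset : T ⊂ S := hTS.ssubset_of_ne fun h => by rw [h] at hTa; omega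
  have hT0 : T.Nonempty := card_pos.1 (hTa ▸ hammingNorm_pos_iff.2 ha0)
  have hcard := card_sdiff_add_card_eq_card hTS
  have hkB := finrank_le_finrank_map_puncture_add (T := T) hB
  have hkB0 := Submodule.one_le_finrank_iff.2 hB0
  have hkA' := finrank_le_finrank_map_puncture_add (T := S \ T) hA
  rw [Finset.sdiff_sdiff_eq_self hTS] at hkA'
  have hα := finrank_le_card_of_le_supported (inf_le_right : A ⊓ supported F T ≤ _)
  have hρ := finrank_le_card_of_le_supported (map_puncture_le (S \ T) A)
  have shortenA (hr : B.map (puncture F T) ≠ ⊥) :=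
    (IH T hTS_ssubset).exists_of_shorten_left haA haT (fun i hi => (mem_filter.1 hi).2) hr
  have shortenB (hβ : B ⊓ supported F (S \ T) ≠ ⊥) :=
    (IH (S \ T) (sdiff_ssubset hTS hT0)).exists_of_shorten_right
      (fun i hi => hfull i (mem_sdiff.1 hi).1) hβ
  by_cases hr : B.map (puncture F T) = ⊥
  · rw [hr, finrank_bot] at hkB
    obtain ⟨v, hv, hv0, hbound⟩ := shortenB fun h => by rw [h, finrank_bot] at hkB; omega
    exact ⟨v, hv, hv0, by omega⟩
  by_cases hβ : B ⊓ supported F (S \ T) = ⊥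
  · rw [hβ, finrank_bot] at hkB
    obtain ⟨v, hv, hv0, hbound⟩ := shortenA hr
    exact ⟨v, hv, hv0, by omega⟩
  obtain ⟨v₁, hv₁, hv₁0, hbound₁⟩ := shortenA hr
  obtain ⟨v₂, hv₂, hv₂0, hbound₂⟩ := shortenB hβ
  -- The two bounds add up to `wt v₁ + wt v₂ + dim A + dim B ≤ #S + 4`.
  by_cases hgood : hammingNorm v₁ ≤ 1 ∨ hammingNorm v₁ + finrank F A + finrank F B ≤ #S + 2
  · exact ⟨v₁, hv₁, hv₁0, hgood⟩
  · exact ⟨v₂, hv₂, hv₂0, by omega⟩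

theorem productSingletonBound (S : Finset ι) : ProductSingletonBound F S := by
  induction S using Finset.strongInduction with
  | H S IH =>
  intro A B hA hB hAB
  have hA0 : A ≠ ⊥ := by rintro rfl; exact hAB (Submodule.bot_mul B)
  have hB0 : B ≠ ⊥ := by rintro rfl; exact hAB (Submodule.mul_bot A)
  by_cases hfull : ∀ i ∈ S, ∃ a ∈ A, a i ≠ 0
  · obtain hkA | hkA : finrank F A = 1 ∨ 2 ≤ finrank F A := by
      have := Submodule.one_le_finrank_iff.2 hA0
      omega
    · obtain ⟨v, hv, hv0, hbound⟩ := exists_mem_mul_of_finrank_eq_one hfull hkA hB hB0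
      exact ⟨v, hv, hv0, Or.inr hbound⟩
    · exact exists_mem_mul_of_full_support IH hA hB hB0 hfull hkA
  · push Not at hfull
    obtain ⟨i, hi, hAi⟩ := hfull
    have hA' : A ≤ supported F (S.erase i) := fun a ha => mem_supported.2 fun j hj => by
      by_cases hji : j = i
      · exact hji ▸ hAi a ha
      · exact mem_supported.1 (hA ha) j fun hjS => hj (mem_erase.2 ⟨hji, hjS⟩)
    exact (IH _ (erase_ssubset hi)).exists_of_le_supported_left (erase_subset i S) hA' hB hAB

/-- The product Singleton bound `d(A ⋆ B) ≤ max 1 (n - dim A - dim B + 2)`. -/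
theorem exists_mem_mul_hammingNorm_le (A B : Submodule F (ι → F)) (hAB : A * B ≠ ⊥) :
    ∃ v ∈ A * B, v ≠ 0 ∧ (hammingNorm v ≤ 1 ∨
      hammingNorm v + finrank F A + finrank F B ≤ Fintype.card ι + 2) := by
  have htop : supported F (univ : Finset ι) = ⊤ := supported_univ
  simpa using productSingletonBound univ A B (htop ▸ le_top) (htop ▸ le_top) hAB

end LinearCode

theorem starProd_eq_mul {F : Type*} [Field F] {n : ℕ} (C D : Submodule F (Fin n → F)) :
    starProd C D = C * D := by
  rw [starProd, Submodule.mul_eq_span_mul_set]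
  congr 1
  ext v
  simp only [starSet, Set.mem_ofPred_eq, Set.mem_mul, SetLike.mem_coe, eq_comm]
  rfl

theorem recovery_threshold_bound_general {F : Type*} [Field F] [DecidableEq F]
    {N m n p X : ℕ} (CA CB : Submodule F (Fin N → F))
    (hCA : Module.finrank F CA = m * p + X) (hCB : Module.finrank F CB = n * p + X)
    (D : ℕ) (hD : IsMinDist (starProd CA CB) D) :
    min N ((m + n) * p + 2 * X - 1) ≤ N - D + 1 := by
  rw [starProd_eq_mul] at hD
  obtain ⟨⟨v₀, hv₀, hv₀0, -⟩, hmin⟩ := hD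
  obtain ⟨v, hv, hv0, hbound⟩ :=
    LinearCode.exists_mem_mul_hammingNorm_le CA CB ((Submodule.ne_bot_iff _).2 ⟨v₀, hv₀, hv₀0⟩)
  have hDv : D ≤ hammingNorm v := hmin v hv hv0
  rw [hCA, hCB, Fintype.card_fin] at hbound
  have : (m + n) * p + 2 * X = (m * p + X) + (n * p + X) := by ring
  omega

/-- Lower bound on the recovery threshold of a linear SDMM scheme: if `C_A` and `C_B`
are codes of length `N` with dimensions `mp + X` and `np + X`, and `D` is the minimum
distance of `C_A ⋆ C_B`, then `R = N - D + 1 ≥ min {N, (m+n)p + 2X - 1}`. -/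
theorem recovery_threshold_bound {F : Type*} [Field F] [Fintype F] [DecidableEq F]
    {N m n p X : ℕ} (CA CB : Submodule F (Fin N → F))
    (hCA : Module.finrank F CA = m * p + X) (hCB : Module.finrank F CB = n * p + X)
    (D : ℕ) (hD : IsMinDist (starProd CA CB) D) :
    min N ((m + n) * p + 2 * X - 1) ≤ N - D + 1 :=
  recovery_threshold_bound_general CA CB hCA hCB D hD
end

section
/- Kernel dimension bound for decoding: let Dec : C_A ⋆ C_B → F_q^{m×n} be a surjective linear map whose kernel contains the subcode C_A ⋆ C_B^sec, where C_A is full-support of dimension mp+X and C_B^sec is a full-support MDS code of dimension X with C_A ⋆ C_B^sec ≠ F_q^N. Then dim(C_A ⋆ C_B) ≥ mn + mp + 2X − 1. -/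
/-!
Fix an information set `P` of `C_A` (size `mp + X`) and a set `T ⊇ P` of size
`min N (mp + 2X - 1)`. For `i ∈ T`, full support of `C_A` gives a codeword `c` with `c i ≠ 0`
vanishing on `P` except at one point, and since every `X` coordinates form an information set of the
MDS code `C_B^sec`, some `d ∈ C_B^sec` equals `1` at `i` and vanishes on the at most `X - 1`
remaining points of `T`. Then `c ⋆ d ∈ C_A ⋆ C_B^sec` is nonzero at `i` and zero elsewhere on `T`,
so `dim (C_A ⋆ C_B^sec) ≥ min N (mp + 2X - 1)`, which is `mp + 2X - 1` as the subcode is proper.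
Since `Dec` kills this subcode and maps `C_A ⋆ C_B` onto `F^{m×n}`, rank–nullity adds `mn`.
-/

open Module Finset

section Coordinates

variable {F : Type*} [Field F] {ι : Type*}

noncomputable def coordRestrict (S : Finset ι) : (ι → F) →ₗ[F] (S → F) :=
  LinearMap.funLeft F F Subtype.val

lemma injective_coordRestrict_comp_subtype_iff (C : Submodule F (ι → F)) (S : Finset ι) :
    Function.Injective ((coordRestrict S).comp C.subtype) ↔
      ∀ c ∈ C, (∀ i ∈ S, c i = 0) → c = 0 := by
  rw [← LinearMap.ker_eq_bot, LinearMap.ker_eq_bot']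
  constructor
  · intro h c hc hcS
    exact congrArg Subtype.val (h ⟨c, hc⟩ (funext fun i => hcS i i.2))
  · intro h c hc
    exact Subtype.ext (h c c.2 fun i hi => congrFun hc ⟨i, hi⟩)

lemma finrank_le_card_of_forall_eq_zero {C : Submodule F (ι → F)} {S : Finset ι}
    (hS : ∀ c ∈ C, (∀ i ∈ S, c i = 0) → c = 0) : finrank F C ≤ #S := by
  simpa using LinearMap.finrank_le_finrank_of_injective
    ((injective_coordRestrict_comp_subtype_iff C S).2 hS)

lemma card_le_finrank_of_forall_exists_ne_zero [Fintype ι] {W : Submodule F (ι → F)} {T : Finset ι}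
    (hT : ∀ i ∈ T, ∃ w ∈ W, w i ≠ 0 ∧ ∀ j ∈ T, j ≠ i → w j = 0) : #T ≤ finrank F W := by
  choose! w hwW hwi hwj using hT
  let v : T → W := fun i => ⟨w i, hwW i i.2⟩
  have hv : LinearIndependent F v := by
    rw [Fintype.linearIndependent_iff]
    intro a ha i
    have hi : ∑ j, a j * w j i = 0 := by
      simpa [v] using congrFun (congrArg Subtype.val ha) i
    rw [Finset.sum_eq_single i (fun j _ hji => by
      rw [hwj j j.2 i i.2 fun h => hji (Subtype.ext h.symm), mul_zero]) (by simp)] at hi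
    exact (mul_eq_zero.1 hi).resolve_right (hwi i i.2)
  simpa using hv.fintype_card_le_finrank

def IsInfoSet (C : Submodule F (ι → F)) (S : Finset ι) : Prop :=
  #S = finrank F C ∧ ∀ c ∈ C, (∀ i ∈ S, c i = 0) → c = 0

lemma exists_isInfoSet [Fintype ι] [DecidableEq ι] (C : Submodule F (ι → F)) : ∃ P, IsInfoSet C P := by
  obtain ⟨P, -, hP⟩ := exists_minimal_le_of_wellFoundedLT
    (fun S : Finset ι => ∀ c ∈ C, (∀ i ∈ S, c i = 0) → c = 0) univ
    fun c _ hc => funext fun i => hc i (mem_univ i)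
  refine ⟨P, le_antisymm ?_ (finrank_le_card_of_forall_eq_zero hP.prop), hP.prop⟩
  refine card_le_finrank_of_forall_exists_ne_zero fun i hi => ?_
  have hErase := hP.not_prop_of_lt (erase_ssubset hi)
  push Not at hErase
  obtain ⟨c, hcC, hc, hc0⟩ := hErase
  refine ⟨c, hcC, fun hci => hc0 (hP.prop c hcC fun j hj => ?_), fun j hj hji => hc j
    (mem_erase.2 ⟨hji, hj⟩)⟩
  rcases eq_or_ne j i with rfl | hji
  · exact hci
  · exact hc j (mem_erase.2 ⟨hji, hj⟩)

lemma IsInfoSet.exists_eqOn [Fintype ι] {C : Submodule F (ι → F)} {P : Finset ι} (hP : IsInfoSet C P)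
    (g : ι → F) : ∃ c ∈ C, ∀ i ∈ P, c i = g i := by
  have hinj := (injective_coordRestrict_comp_subtype_iff C P).2 hP.2
  have hsurj := (LinearMap.injective_iff_surjective_of_finrank_eq_finrank
    (by simp [hP.1])).1 hinj
  obtain ⟨c, hc⟩ := hsurj fun i => g i
  exact ⟨c, c.2, fun i hi => congrFun hc ⟨i, hi⟩⟩

lemma IsInfoSet.exists_single [Fintype ι] [DecidableEq ι] {C : Submodule F (ι → F)} {P : Finset ι} (hP : IsInfoSet C P)
    (hC : ∀ i, ∃ c ∈ C, c i ≠ 0) (i : ι) :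
    ∃ p ∈ P, ∃ c ∈ C, c i ≠ 0 ∧ ∀ q ∈ P, q ≠ p → c q = 0 := by
  choose b hbC hbP using fun p => hP.exists_eqOn (Pi.single p 1)
  by_contra! h
  have hbi : ∀ p ∈ P, b p i = 0 := fun p hp => by
    by_contra hne
    obtain ⟨q, hq, hqp, hbq⟩ := h p hp (b p) (hbC p) hne
    exact hbq (by simp [hbP p q hq, hqp])
  obtain ⟨c, hcC, hci⟩ := hC i
  -- `b` is the basis of `C` dual to the coordinates in `P`
  have hc : c = ∑ p ∈ P, c p • b p := by
    refine sub_eq_zero.1 (hP.2 _ (sub_mem hcC (sum_mem fun p _ => C.smul_mem _ (hbC p)))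
      fun q hq => ?_)
    simp [Finset.sum_apply, hbP _ q hq, Pi.single_apply, hq]
  refine hci ?_
  rw [hc]
  simp only [Finset.sum_apply, Pi.smul_apply, smul_eq_mul]
  exact sum_eq_zero fun p hp => by rw [hbi p hp, mul_zero]

lemma exists_eqOn_of_card_le [Fintype ι] {D : Submodule F (ι → F)}
    (hD : ∀ S : Finset ι, #S = finrank F D → IsInfoSet D S) {S : Finset ι}
    (hS : #S ≤ finrank F D) (g : ι → F) : ∃ d ∈ D, ∀ i ∈ S, d i = g i := by
  have hDle : finrank F D ≤ #(univ : Finset ι) := by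
    simpa using Submodule.finrank_le D
  obtain ⟨S', hSS', -, hS'⟩ := exists_subsuperset_card_eq (subset_univ S) hS hDle
  obtain ⟨d, hdD, hd⟩ := (hD S' hS').exists_eqOn g
  exact ⟨d, hdD, fun i hi => hd i (hSS' hi)⟩

end Coordinates

section StarProduct

variable {F : Type*} [Field F] {n : ℕ}

lemma IsMDS.isInfoSet [DecidableEq F] {D : Submodule F (Fin n → F)} (hD : IsMDS D)
    (S : Finset (Fin n)) (hS : #S = finrank F D) : IsInfoSet D S := by
  refine ⟨hS, fun d hdD hdS => ?_⟩
  by_contra hd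
  have hwt := hD.2 d hdD hd
  have hDle : finrank F D ≤ n := by simpa using Submodule.finrank_le D
  have hsupp : Disjoint S ({i | d i ≠ 0} : Finset (Fin n)) :=
    disjoint_left.2 fun i hiS hi => (mem_filter.1 hi).2 (hdS i hiS)
  have := card_union_of_disjoint hsupp
  have := card_le_univ (S ∪ ({i | d i ≠ 0} : Finset (Fin n)))
  simp only [wt, Fintype.card_fin] at *
  omega

lemma IsMDS.finrank_pos_s17 [DecidableEq F] {D : Submodule F (Fin n → F)} (hD : IsMDS D) :
    0 < finrank F D := by
  obtain ⟨d, hdD, hd, -⟩ := hD.1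
  exact Module.finrank_pos_iff_exists_ne_zero.2 ⟨⟨d, hdD⟩, by simpa using hd⟩

lemma mul_mem_starProd {C D : Submodule F (Fin n → F)} {c d : Fin n → F} (hc : c ∈ C)
    (hd : d ∈ D) : c * d ∈ starProd C D :=
  Submodule.subset_span ⟨c, hc, d, hd, rfl⟩

lemma starProd_mono_right (C : Submodule F (Fin n → F)) {D D' : Submodule F (Fin n → F)}
    (h : D ≤ D') : starProd C D ≤ starProd C D' :=
  Submodule.span_le.2 fun _ ⟨_, hc, _, hd, hv⟩ => hv ▸ mul_mem_starProd hc (h hd)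

variable {C D : Submodule F (Fin n → F)}

lemma exists_mem_starProd_single (hC : FullSupport C)
    (hD : ∀ S : Finset (Fin n), #S = finrank F D → IsInfoSet D S) {P T : Finset (Fin n)}
    (hP : IsInfoSet C P) (hPT : P ⊆ T) (hT : #T + 1 ≤ finrank F C + finrank F D) {i : Fin n}
    (hi : i ∈ T) : ∃ w ∈ starProd C D, w i ≠ 0 ∧ ∀ j ∈ T, j ≠ i → w j = 0 := by
  obtain ⟨p, hp, c, hcC, hci, hc⟩ := hP.exists_single hC i
  have hcard : #(T \ P.erase p) ≤ finrank F D := by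
    rw [card_sdiff_of_subset ((erase_subset p P).trans hPT), card_erase_of_mem hp, hP.1]
    omega
  obtain ⟨d, hdD, hd⟩ := exists_eqOn_of_card_le hD hcard (Pi.single i 1)
  have hiP : i ∉ P.erase p := fun h => hci (hc i (mem_of_mem_erase h) (ne_of_mem_erase h))
  refine ⟨c * d, mul_mem_starProd hcC hdD, by simp [hd i (mem_sdiff.2 ⟨hi, hiP⟩), hci],
    fun j hj hji => ?_⟩
  by_cases hjP : j ∈ P.erase p
  · simp [hc j (mem_of_mem_erase hjP) (ne_of_mem_erase hjP)]
  · simp [hd j (mem_sdiff.2 ⟨hj, hjP⟩), hji]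

lemma min_le_finrank_starProd (hC : FullSupport C) (hDpos : 0 < finrank F D)
    (hD : ∀ S : Finset (Fin n), #S = finrank F D → IsInfoSet D S) :
    min n (finrank F C + finrank F D - 1) ≤ finrank F (starProd C D) := by
  obtain ⟨P, hP⟩ := exists_isInfoSet C
  have hCle : finrank F C ≤ n := by simpa using Submodule.finrank_le C
  obtain ⟨T, hPT, -, hT⟩ := exists_subsuperset_card_eq (subset_univ P)
    (n := min n (finrank F C + finrank F D - 1)) (by rw [hP.1]; omega) (by simp)
  rw [← hT]
  exact card_le_finrank_of_forall_exists_ne_zero fun i hi =>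
    exists_mem_starProd_single hC hD hP hPT (by omega) hi

end StarProduct

lemma finrank_add_finrank_le_of_forall_exists {K V M : Type*} [Field K] [AddCommGroup V]
    [Module K V] [AddCommGroup M] [Module K M] {W₀ W : Submodule K V} [FiniteDimensional K W]
    (f : V →ₗ[K] M) (hle : W₀ ≤ W) (hker : ∀ v ∈ W₀, f v = 0) (hsurj : ∀ y, ∃ v ∈ W, f v = y) :
    finrank K W₀ + finrank K M ≤ finrank K W := by
  have hrange : LinearMap.range (f.domRestrict W) = ⊤ :=
    LinearMap.range_eq_top.2 fun y => by
      obtain ⟨v, hv, rfl⟩ := hsurj y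
      exact ⟨⟨v, hv⟩, rfl⟩
  have hW₀ : Submodule.comap W.subtype W₀ ≤ LinearMap.ker (f.domRestrict W) :=
    fun v hv => hker v hv
  have := (f.domRestrict W).finrank_range_add_finrank_ker
  have := Submodule.finrank_mono hW₀
  rw [(Submodule.comapSubtypeEquivOfLe hle).finrank_eq] at this
  rw [hrange, finrank_top] at *
  omega

theorem decoder_kernel_dim_bound_general {F : Type*} [Field F] [DecidableEq F]
    {N m n p X : ℕ} (CA CB CBsec : Submodule F (Fin N → F))
    (hCAfull : FullSupport CA) (hCAdim : Module.finrank F CA = m * p + X)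
    (hBsecMDS : IsMDS CBsec)
    (hBsecdim : Module.finrank F CBsec = X) (hsub : CBsec ≤ CB)
    (hne : starProd CA CBsec ≠ ⊤)
    (Dec : (Fin N → F) →ₗ[F] Matrix (Fin m) (Fin n) F)
    (hker : ∀ v ∈ starProd CA CBsec, Dec v = 0)
    (hsurj : ∀ M : Matrix (Fin m) (Fin n) F, ∃ v ∈ starProd CA CB, Dec v = M) :
    m * n + m * p + 2 * X - 1 ≤ Module.finrank F (starProd CA CB) := by
  have hstar := min_le_finrank_starProd hCAfull hBsecMDS.finrank_pos_s17 hBsecMDS.isInfoSet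
  have hproper : finrank F (starProd CA CBsec) < N := by
    simpa using Submodule.finrank_lt hne
  have hdec := finrank_add_finrank_le_of_forall_exists Dec
    (starProd_mono_right CA hsub) hker hsurj
  rw [Module.finrank_matrix, Module.finrank_self, Fintype.card_fin, Fintype.card_fin] at hdec
  have := hBsecMDS.finrank_pos_s17
  omega

/-- Kernel dimension bound for decoding: if `Dec` is a linear map which is surjective
from `C_A ⋆ C_B` onto `F^{m×n}` and vanishes on `C_A ⋆ C_B^sec`, where `C_A` is
full-support of dimension `mp + X`, `C_B^sec ≤ C_B` is a full-support MDS code of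
dimension `X`, and `C_A ⋆ C_B^sec ≠ F^N`, then `dim (C_A ⋆ C_B) ≥ mn + mp + 2X - 1`. -/
theorem decoder_kernel_dim_bound {F : Type*} [Field F] [Fintype F] [DecidableEq F]
    {N m n p X : ℕ} (CA CB CBsec : Submodule F (Fin N → F))
    (hCAfull : FullSupport CA) (hCAdim : Module.finrank F CA = m * p + X)
    (hBsecfull : FullSupport CBsec) (hBsecMDS : IsMDS CBsec)
    (hBsecdim : Module.finrank F CBsec = X) (hsub : CBsec ≤ CB)
    (hne : starProd CA CBsec ≠ ⊤)
    (Dec : (Fin N → F) →ₗ[F] Matrix (Fin m) (Fin n) F)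
    (hker : ∀ v ∈ starProd CA CBsec, Dec v = 0)
    (hsurj : ∀ M : Matrix (Fin m) (Fin n) F, ∃ v ∈ starProd CA CB, Dec v = M) :
    m * n + m * p + 2 * X - 1 ≤ Module.finrank F (starProd CA CB) :=
  decoder_kernel_dim_bound_general CA CB CBsec hCAfull hCAdim hBsecMDS hBsecdim hsub hne Dec hker
    hsurj
end
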